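/- arXiv:2409.18251 — 2 statements merged into one kernel-verified Lean document; each statement's English description precedes it below -/
import Mathlib

section
/- (Lemma 12(iv), second claim.) Let γ ∈ PSL₂(ℤ) be a primitive hyperbolic element whose conjugacy class in PSL₂(ℤ) contains both an element ambiguous of the first kind and an element ambiguous of the second kind. Then exactly 2 elements of the conjugacy class of γ are ambiguous of the first kind and exactly 2 elements of the conjugacy class of γ are ambiguous of the second kind. -/
open Matrix
open scoped MatrixGroups

instance : Fact (Even (Fintype.card (Fin 2))) := ⟨⟨1, rfl⟩⟩

/-- The determinant `-1` integer matrix `W = [[1, 0], [0, -1]]`. -/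
noncomputable def Wmat : Matrix (Fin 2) (Fin 2) ℤ := !![1, 0; 0, -1]

/-- The determinant `-1` integer matrix `W₁ = [[1, 0], [1, -1]]`. -/
noncomputable def W1mat : Matrix (Fin 2) (Fin 2) ℤ := !![1, 0; 1, -1]

/-- A lift `A ∈ SL₂(ℤ)` is ambiguous of the first kind if `W·A·W⁻¹ = ±A⁻¹`. -/
def Amb1 (A : SL(2, ℤ)) : Prop :=
  Wmat * (A : Matrix (Fin 2) (Fin 2) ℤ) * Wmat⁻¹ = ((A⁻¹ : SL(2, ℤ)) : Matrix (Fin 2) (Fin 2) ℤ) ∨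
  Wmat * (A : Matrix (Fin 2) (Fin 2) ℤ) * Wmat⁻¹ = -((A⁻¹ : SL(2, ℤ)) : Matrix (Fin 2) (Fin 2) ℤ)

/-- A lift `A ∈ SL₂(ℤ)` is ambiguous of the second kind if `W₁·A·W₁⁻¹ = ±A⁻¹`. -/
def Amb2 (A : SL(2, ℤ)) : Prop :=
  W1mat * (A : Matrix (Fin 2) (Fin 2) ℤ) * W1mat⁻¹ = ((A⁻¹ : SL(2, ℤ)) : Matrix (Fin 2) (Fin 2) ℤ) ∨
  W1mat * (A : Matrix (Fin 2) (Fin 2) ℤ) * W1mat⁻¹ = -((A⁻¹ : SL(2, ℤ)) : Matrix (Fin 2) (Fin 2) ℤ)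

/-- The subgroup `{±1}` of `SL₂(ℤ)`. -/
def pmOne : Subgroup SL(2, ℤ) := Subgroup.zpowers (-1)

instance : pmOne.Normal := by
  constructor
  intro x hx g
  obtain ⟨n, rfl⟩ := Subgroup.mem_zpowers_iff.mp hx
  have hc : Commute g (-1 : SL(2, ℤ)) := by
    show g * (-1) = (-1) * g
    apply Subtype.ext
    show ((g * (-1) : SL(2, ℤ)) : Matrix (Fin 2) (Fin 2) ℤ)
        = (((-1) * g : SL(2, ℤ)) : Matrix (Fin 2) (Fin 2) ℤ)
    simp
  have hcn : Commute g ((-1 : SL(2, ℤ)) ^ n) := hc.zpow_right n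
  have : g * (-1 : SL(2, ℤ)) ^ n * g⁻¹ = (-1) ^ n := by
    rw [hcn.eq, mul_assoc, mul_inv_cancel, mul_one]
  rw [this]
  exact Subgroup.zpow_mem _ (Subgroup.mem_zpowers _) n

/-- `PSL₂(ℤ) = SL₂(ℤ)/{±1}`. -/
abbrev PSL2Z := SL(2, ℤ) ⧸ pmOne

/-- An element of `PSL₂(ℤ)` is hyperbolic if the absolute value of the trace of a lift
to `SL₂(ℤ)` is greater than `2`. -/
def IsHyp (γ : PSL2Z) : Prop :=
  ∃ A : SL(2, ℤ), (QuotientGroup.mk A : PSL2Z) = γ ∧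
    2 < |Matrix.trace (A : Matrix (Fin 2) (Fin 2) ℤ)|

/-- An element of `PSL₂(ℤ)` is primitive if it is not a proper power. -/
def IsPrim (γ : PSL2Z) : Prop := ¬ ∃ (δ : PSL2Z) (n : ℕ), 2 ≤ n ∧ δ ^ n = γ

/-- An element of `PSL₂(ℤ)` is ambiguous of the first kind if it has a lift which is. -/
def AmbFst (γ : PSL2Z) : Prop :=
  ∃ A : SL(2, ℤ), (QuotientGroup.mk A : PSL2Z) = γ ∧ Amb1 A

/-- An element of `PSL₂(ℤ)` is ambiguous of the second kind if it has a lift which is. -/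
def AmbSnd (γ : PSL2Z) : Prop :=
  ∃ A : SL(2, ℤ), (QuotientGroup.mk A : PSL2Z) = γ ∧ Amb2 A

/-- The inverse hyperbolic cosine. -/
noncomputable def arcosh (x : ℝ) : ℝ := Real.log (x + Real.sqrt (x ^ 2 - 1))

/-- The translation length `ℓ(γ) = 2 arcosh(|tr γ|/2)` of `γ ∈ PSL₂(ℤ)` is at most `s`. -/
def TransLenLE (γ : PSL2Z) (s : ℝ) : Prop :=
  ∃ A : SL(2, ℤ), (QuotientGroup.mk A : PSL2Z) = γ ∧
    2 * arcosh (((|Matrix.trace (A : Matrix (Fin 2) (Fin 2) ℤ)| : ℤ) : ℝ) / 2) ≤ s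
section Basics

open scoped MatrixGroups

lemma conj_mul_aux {M X Y : Matrix (Fin 2) (Fin 2) ℤ} (h : M * M = 1) :
    M * (X * Y) * M = (M * X * M) * (M * Y * M) := by
  have h2 : (M * X * M) * (M * Y * M) = M * X * (M * M) * Y * M := by noncomm_ring
  rw [h2, h]; noncomm_ring

lemma Wmat_mul_self : Wmat * Wmat = 1 := by
  simp [Wmat, ← Matrix.one_fin_two, Matrix.mul_fin_two]

lemma W1mat_mul_self : W1mat * W1mat = 1 := by
  simp [W1mat, ← Matrix.one_fin_two, Matrix.mul_fin_two]

lemma Wmat_inv : Wmat⁻¹ = Wmat := Matrix.inv_eq_right_inv Wmat_mul_self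

lemma W1mat_inv : W1mat⁻¹ = W1mat := Matrix.inv_eq_right_inv W1mat_mul_self

lemma Wmat_det : Wmat.det = -1 := by
  simp [Wmat, Matrix.det_fin_two_of]

lemma W1mat_det : W1mat.det = -1 := by
  simp [W1mat, Matrix.det_fin_two_of]

/-- Conjugation by `W` as an automorphism of `SL(2,ℤ)`. -/
noncomputable def sigSL : SL(2, ℤ) →* SL(2, ℤ) where
  toFun A := ⟨Wmat * (A : Matrix (Fin 2) (Fin 2) ℤ) * Wmat, by
    have := A.2
    rw [Matrix.det_mul, Matrix.det_mul, Wmat_det, this]; ring⟩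
  map_one' := by
    apply Subtype.ext
    show Wmat * 1 * Wmat = 1
    rw [mul_one, Wmat_mul_self]
  map_mul' A B := by
    apply Subtype.ext
    exact conj_mul_aux Wmat_mul_self

/-- Conjugation by `W₁` as an automorphism of `SL(2,ℤ)`. -/
noncomputable def tauSL : SL(2, ℤ) →* SL(2, ℤ) where
  toFun A := ⟨W1mat * (A : Matrix (Fin 2) (Fin 2) ℤ) * W1mat, by
    have := A.2
    rw [Matrix.det_mul, Matrix.det_mul, W1mat_det, this]; ring⟩
  map_one' := by
    apply Subtype.ext
    show W1mat * 1 * W1mat = 1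
    rw [mul_one, W1mat_mul_self]
  map_mul' A B := by
    apply Subtype.ext
    exact conj_mul_aux W1mat_mul_self

lemma sigSL_coe (A : SL(2, ℤ)) :
    (sigSL A : Matrix (Fin 2) (Fin 2) ℤ) = Wmat * (A : Matrix (Fin 2) (Fin 2) ℤ) * Wmat := rfl

lemma tauSL_coe (A : SL(2, ℤ)) :
    (tauSL A : Matrix (Fin 2) (Fin 2) ℤ) = W1mat * (A : Matrix (Fin 2) (Fin 2) ℤ) * W1mat := rfl

lemma sigSL_sigSL (A : SL(2, ℤ)) : sigSL (sigSL A) = A := by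
  apply Subtype.ext
  show Wmat * (Wmat * (A : Matrix (Fin 2) (Fin 2) ℤ) * Wmat) * Wmat = _
  have h2 : Wmat * (Wmat * (A : Matrix (Fin 2) (Fin 2) ℤ) * Wmat) * Wmat
      = (Wmat * Wmat) * (A : Matrix (Fin 2) (Fin 2) ℤ) * (Wmat * Wmat) := by noncomm_ring
  rw [h2, Wmat_mul_self]; noncomm_ring

lemma tauSL_tauSL (A : SL(2, ℤ)) : tauSL (tauSL A) = A := by
  apply Subtype.ext
  show W1mat * (W1mat * (A : Matrix (Fin 2) (Fin 2) ℤ) * W1mat) * W1mat = _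
  have h2 : W1mat * (W1mat * (A : Matrix (Fin 2) (Fin 2) ℤ) * W1mat) * W1mat
      = (W1mat * W1mat) * (A : Matrix (Fin 2) (Fin 2) ℤ) * (W1mat * W1mat) := by noncomm_ring
  rw [h2, W1mat_mul_self]; noncomm_ring

lemma sigSL_neg (A : SL(2, ℤ)) : sigSL (-A) = -(sigSL A) := by
  apply Subtype.ext
  show Wmat * (((-A : SL(2,ℤ))) : Matrix (Fin 2) (Fin 2) ℤ) * Wmat = _
  simp [sigSL_coe]

lemma tauSL_neg (A : SL(2, ℤ)) : tauSL (-A) = -(tauSL A) := by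
  apply Subtype.ext
  show W1mat * (((-A : SL(2,ℤ))) : Matrix (Fin 2) (Fin 2) ℤ) * W1mat = _
  simp [tauSL_coe]

lemma mem_pmOne {x : SL(2, ℤ)} : x ∈ pmOne ↔ x = 1 ∨ x = -1 := by
  constructor
  · intro hx
    obtain ⟨n, rfl⟩ := Subgroup.mem_zpowers_iff.mp hx
    rcases Int.even_or_odd n with h | h
    · left; exact h.neg_one_zpow
    · right
      obtain ⟨k, rfl⟩ := h
      rw [_root_.zpow_add, Even.neg_one_zpow ⟨k, by ring⟩, one_mul, zpow_one]
  · rintro (rfl | rfl)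
    · exact one_mem _
    · exact Subgroup.mem_zpowers _

lemma mk_eq_mk {A B : SL(2, ℤ)} :
    (QuotientGroup.mk A : PSL2Z) = QuotientGroup.mk B ↔ A = B ∨ A = -B := by
  rw [QuotientGroup.eq]
  rw [mem_pmOne]
  constructor
  · rintro (h | h)
    · left; rw [← mul_one A, ← h, ← mul_assoc, mul_inv_cancel, one_mul]
    · right
      have hB : B = A * (A⁻¹ * B) := by rw [← mul_assoc, mul_inv_cancel, one_mul]
      rw [hB, h, mul_neg_one, neg_neg]
  · rintro (rfl | rfl)
    · left; simp
    · right; simp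

lemma mk_neg (A : SL(2, ℤ)) :
    (QuotientGroup.mk (-A) : PSL2Z) = QuotientGroup.mk A :=
  mk_eq_mk.mpr (Or.inr rfl)

end Basics
section PSLevel

open scoped MatrixGroups

/-- Conjugation by `W` on `PSL₂(ℤ)`. -/
noncomputable def sig : PSL2Z →* PSL2Z :=
  QuotientGroup.map pmOne pmOne sigSL (by
    intro x hx
    rcases mem_pmOne.mp hx with rfl | rfl
    · simpa using one_mem pmOne
    · show sigSL (-1) ∈ pmOne
      rw [show (-1 : SL(2,ℤ)) = -(1 : SL(2,ℤ)) from rfl, sigSL_neg, _root_.map_one]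
      exact mem_pmOne.mpr (Or.inr rfl))

/-- Conjugation by `W₁` on `PSL₂(ℤ)`. -/
noncomputable def tau : PSL2Z →* PSL2Z :=
  QuotientGroup.map pmOne pmOne tauSL (by
    intro x hx
    rcases mem_pmOne.mp hx with rfl | rfl
    · simpa using one_mem pmOne
    · show tauSL (-1) ∈ pmOne
      rw [show (-1 : SL(2,ℤ)) = -(1 : SL(2,ℤ)) from rfl, tauSL_neg, _root_.map_one]
      exact mem_pmOne.mpr (Or.inr rfl))

lemma sig_mk (A : SL(2, ℤ)) :
    sig (QuotientGroup.mk A) = QuotientGroup.mk (sigSL A) := rfl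

lemma tau_mk (A : SL(2, ℤ)) :
    tau (QuotientGroup.mk A) = QuotientGroup.mk (tauSL A) := rfl

lemma sig_sig (g : PSL2Z) : sig (sig g) = g := by
  obtain ⟨A, rfl⟩ := QuotientGroup.mk_surjective g
  rw [sig_mk, sig_mk, sigSL_sigSL]

lemma tau_tau (g : PSL2Z) : tau (tau g) = g := by
  obtain ⟨A, rfl⟩ := QuotientGroup.mk_surjective g
  rw [tau_mk, tau_mk, tauSL_tauSL]

/-- The element `S = [[0,1],[-1,0]]` of `SL(2,ℤ)`. -/
noncomputable def SS : SL(2, ℤ) := ⟨!![0, 1; -1, 0], by simp [Matrix.det_fin_two_of]⟩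

/-- The element `S₁ = [[1,-2],[1,-1]]` of `SL(2,ℤ)`. -/
noncomputable def S1 : SL(2, ℤ) := ⟨!![1, -2; 1, -1], by simp [Matrix.det_fin_two_of]⟩

/-- The element `L = [[1,0],[1,1]]` of `SL(2,ℤ)`. -/
noncomputable def LL : SL(2, ℤ) := ⟨!![1, 0; 1, 1], by simp [Matrix.det_fin_two_of]⟩

/-- `s`, `s₁`, `l` as elements of `PSL₂(ℤ)`. -/
noncomputable def sE : PSL2Z := QuotientGroup.mk SS
noncomputable def s1E : PSL2Z := QuotientGroup.mk S1
noncomputable def lE : PSL2Z := QuotientGroup.mk LL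

lemma LL_inv_coe : ((LL⁻¹ : SL(2,ℤ)) : Matrix (Fin 2) (Fin 2) ℤ) = !![1, 0; -1, 1] := by
  rw [Matrix.SpecialLinearGroup.coe_inv]
  show (LL : Matrix (Fin 2) (Fin 2) ℤ).adjugate = _
  rw [show (LL : Matrix (Fin 2) (Fin 2) ℤ) = !![1, 0; 1, 1] from rfl,
    Matrix.adjugate_fin_two_of]
  norm_num

lemma tauSL_eq (A : SL(2, ℤ)) : tauSL A = LL * sigSL A * LL⁻¹ := by
  apply Subtype.ext
  rw [Matrix.SpecialLinearGroup.coe_mul, Matrix.SpecialLinearGroup.coe_mul,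
    LL_inv_coe, sigSL_coe, tauSL_coe]
  rw [show (LL : Matrix (Fin 2) (Fin 2) ℤ) = !![1, 0; 1, 1] from rfl]
  have h1 : W1mat = !![1, 0; 1, 1] * Wmat := by
    simp [Wmat, W1mat, Matrix.mul_fin_two]
  have h2 : W1mat = Wmat * !![1, 0; -1, 1] := by
    simp [Wmat, W1mat, Matrix.mul_fin_two]
  calc W1mat * ↑A * W1mat = (!![1, 0; 1, 1] * Wmat) * ↑A * (Wmat * !![1, 0; -1, 1]) := by
        rw [← h1, ← h2]
    _ = !![1, 0; 1, 1] * (Wmat * ↑A * Wmat) * !![1, 0; -1, 1] := by noncomm_ring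

lemma tau_eq (g : PSL2Z) : tau g = lE * sig g * lE⁻¹ := by
  obtain ⟨A, rfl⟩ := QuotientGroup.mk_surjective g
  rw [tau_mk, sig_mk, tauSL_eq]
  rfl

lemma AmbFst_iff {γ : PSL2Z} : AmbFst γ ↔ sig γ = γ⁻¹ := by
  constructor
  · rintro ⟨A, rfl, h⟩
    rw [Amb1, Wmat_inv] at h
    have : sigSL A = A⁻¹ ∨ sigSL A = -(A⁻¹) := by
      rcases h with h | h
      · left; exact Subtype.ext h
      · right; apply Subtype.ext; rw [Matrix.SpecialLinearGroup.coe_neg]; exact h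
    rw [sig_mk, ← QuotientGroup.mk_inv]
    rcases this with h | h
    · rw [h]
    · rw [h, mk_neg]
  · intro h
    obtain ⟨A, rfl⟩ := QuotientGroup.mk_surjective γ
    refine ⟨A, rfl, ?_⟩
    rw [sig_mk, ← QuotientGroup.mk_inv, mk_eq_mk] at h
    rw [Amb1, Wmat_inv]
    rcases h with h | h
    · left; rw [← sigSL_coe, h]
    · right; rw [← sigSL_coe, h, Matrix.SpecialLinearGroup.coe_neg]

lemma AmbSnd_iff {γ : PSL2Z} : AmbSnd γ ↔ tau γ = γ⁻¹ := by
  constructor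
  · rintro ⟨A, rfl, h⟩
    rw [Amb2, W1mat_inv] at h
    have : tauSL A = A⁻¹ ∨ tauSL A = -(A⁻¹) := by
      rcases h with h | h
      · left; exact Subtype.ext h
      · right; apply Subtype.ext; rw [Matrix.SpecialLinearGroup.coe_neg]; exact h
    rw [tau_mk, ← QuotientGroup.mk_inv]
    rcases this with h | h
    · rw [h]
    · rw [h, mk_neg]
  · intro h
    obtain ⟨A, rfl⟩ := QuotientGroup.mk_surjective γ
    refine ⟨A, rfl, ?_⟩
    rw [tau_mk, ← QuotientGroup.mk_inv, mk_eq_mk] at h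
    rw [Amb2, W1mat_inv]
    rcases h with h | h
    · left; rw [← tauSL_coe, h]
    · right; rw [← tauSL_coe, h, Matrix.SpecialLinearGroup.coe_neg]

end PSLevel
section Computations

open scoped MatrixGroups

lemma SL2_repr (A : SL(2,ℤ)) : ∃ a b c d : ℤ,
    (A : Matrix (Fin 2) (Fin 2) ℤ) = !![a, b; c, d] ∧ a * d - b * c = 1 := by
  refine ⟨_, _, _, _, Matrix.eta_fin_two _, ?_⟩
  have h := A.2
  rw [Matrix.det_fin_two] at h
  exact h

lemma SS_coe : (SS : Matrix (Fin 2) (Fin 2) ℤ) = !![0, 1; -1, 0] := rfl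
lemma S1_coe : (S1 : Matrix (Fin 2) (Fin 2) ℤ) = !![1, -2; 1, -1] := rfl
lemma LL_coe : (LL : Matrix (Fin 2) (Fin 2) ℤ) = !![1, 0; 1, 1] := rfl

lemma fix_sig {g : PSL2Z} : sig g = g ↔ g = 1 ∨ g = sE := by
  constructor
  · intro h
    obtain ⟨A, rfl⟩ := QuotientGroup.mk_surjective g
    rw [sig_mk, mk_eq_mk] at h
    obtain ⟨a, b, c, d, hM, hdet⟩ := SL2_repr A
    rcases h with h | h
    · left
      have h' : Wmat * (A : Matrix (Fin 2) (Fin 2) ℤ) * Wmat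
          = (A : Matrix (Fin 2) (Fin 2) ℤ) := congrArg Subtype.val h
      rw [hM, Wmat, Matrix.mul_fin_two, Matrix.mul_fin_two, ← Matrix.ext_iff] at h'
      simp [Fin.forall_fin_two] at h'
      have hb : b = 0 := by omega
      have hc : c = 0 := by omega
      have had : a * d = 1 := by rw [hb, hc] at hdet; linear_combination hdet
      rcases Int.mul_eq_one_iff_eq_one_or_neg_one.mp had with ⟨rfl, rfl⟩ | ⟨rfl, rfl⟩
      · have : A = 1 := by
          apply Subtype.ext
          rw [hM, hb, hc, Matrix.SpecialLinearGroup.coe_one, Matrix.one_fin_two]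
        rw [this, QuotientGroup.mk_one]
      · have : A = -1 := by
          apply Subtype.ext
          rw [hM, hb, hc, Matrix.SpecialLinearGroup.coe_neg,
            Matrix.SpecialLinearGroup.coe_one, Matrix.one_fin_two]
          norm_num
        rw [this, mk_neg, QuotientGroup.mk_one]
    · right
      have h' : Wmat * (A : Matrix (Fin 2) (Fin 2) ℤ) * Wmat
          = -(A : Matrix (Fin 2) (Fin 2) ℤ) := by
        have := congrArg Subtype.val h
        rwa [Matrix.SpecialLinearGroup.coe_neg] at this
      rw [hM, Wmat, Matrix.mul_fin_two, Matrix.mul_fin_two] at h'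
      rw [show -(!![a,b;c,d]) = !![-a,-b;-c,-d] from by norm_num, ← Matrix.ext_iff] at h'
      simp [Fin.forall_fin_two] at h'
      have ha : a = 0 := by omega
      have hd : d = 0 := by omega
      have hbc : (-b) * c = 1 := by rw [ha, hd] at hdet; linear_combination hdet
      rcases Int.mul_eq_one_iff_eq_one_or_neg_one.mp hbc with ⟨hb, rfl⟩ | ⟨hb, rfl⟩
      · have hb' : b = -1 := by omega
        have : A = -SS := by
          apply Subtype.ext
          rw [Matrix.SpecialLinearGroup.coe_neg, hM, ha, hd, hb', SS_coe]
          norm_num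
        rw [this, mk_neg]; rfl
      · have hb' : b = 1 := by omega
        have : A = SS := by
          apply Subtype.ext
          rw [hM, ha, hd, hb', SS_coe]
        rw [this]; rfl
  · rintro (rfl | rfl)
    · exact map_one sig
    · show sig (QuotientGroup.mk SS) = _
      rw [sig_mk, ← mk_neg]
      congr 1
      apply Subtype.ext
      rw [Matrix.SpecialLinearGroup.coe_neg, sigSL_coe, SS_coe, Wmat]
      norm_num [Matrix.mul_fin_two]
lemma fix_tau {g : PSL2Z} : tau g = g ↔ g = 1 ∨ g = s1E := by
  constructor
  · intro h
    obtain ⟨A, rfl⟩ := QuotientGroup.mk_surjective g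
    rw [tau_mk, mk_eq_mk] at h
    obtain ⟨a, b, c, d, hM, hdet⟩ := SL2_repr A
    rcases h with h | h
    · left
      have h' : W1mat * (A : Matrix (Fin 2) (Fin 2) ℤ) * W1mat
          = (A : Matrix (Fin 2) (Fin 2) ℤ) := congrArg Subtype.val h
      rw [hM, W1mat, Matrix.mul_fin_two, Matrix.mul_fin_two, ← Matrix.ext_iff] at h'
      simp [Fin.forall_fin_two] at h'
      have hb : b = 0 := by omega
      have had : a * d = 1 := by rw [hb] at hdet; linear_combination hdet
      rcases Int.mul_eq_one_iff_eq_one_or_neg_one.mp had with ⟨rfl, rfl⟩ | ⟨rfl, rfl⟩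
      · have hc : c = 0 := by omega
        have : A = 1 := by
          apply Subtype.ext
          rw [hM, hb, hc, Matrix.SpecialLinearGroup.coe_one, Matrix.one_fin_two]
        rw [this, QuotientGroup.mk_one]
      · have hc : c = 0 := by omega
        have : A = -1 := by
          apply Subtype.ext
          rw [hM, hb, hc, Matrix.SpecialLinearGroup.coe_neg,
            Matrix.SpecialLinearGroup.coe_one, Matrix.one_fin_two]
          norm_num
        rw [this, mk_neg, QuotientGroup.mk_one]
    · right
      have h' : W1mat * (A : Matrix (Fin 2) (Fin 2) ℤ) * W1mat
          = -(A : Matrix (Fin 2) (Fin 2) ℤ) := by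
        have := congrArg Subtype.val h
        rwa [Matrix.SpecialLinearGroup.coe_neg] at this
      rw [hM, W1mat, Matrix.mul_fin_two, Matrix.mul_fin_two] at h'
      rw [show -(!![a,b;c,d]) = !![-a,-b;-c,-d] from by norm_num, ← Matrix.ext_iff] at h'
      simp [Fin.forall_fin_two] at h'
      have hb : b = -2 * a := by omega
      have hd : d = -a := by omega
      have key : a * (2 * c - a) = 1 := by
        rw [hb, hd] at hdet; linear_combination hdet
      rcases Int.mul_eq_one_iff_eq_one_or_neg_one.mp key with ⟨rfl, h2⟩ | ⟨rfl, h2⟩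
      · have hc : c = 1 := by omega
        have : A = S1 := by
          apply Subtype.ext
          rw [hM, hb, hd, hc, S1_coe]; norm_num
        rw [this]; rfl
      · have hc : c = -1 := by omega
        have : A = -S1 := by
          apply Subtype.ext
          rw [hM, hb, hd, hc, Matrix.SpecialLinearGroup.coe_neg, S1_coe]; norm_num
        rw [this, mk_neg]; rfl
  · rintro (rfl | rfl)
    · exact map_one tau
    · show tau (QuotientGroup.mk S1) = _
      rw [tau_mk, show tauSL S1 = -S1 from ?_, mk_neg]
      · rfl
      apply Subtype.ext
      rw [tauSL_coe, S1_coe, W1mat, Matrix.SpecialLinearGroup.coe_neg, S1_coe]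
      norm_num [Matrix.mul_fin_two]

lemma comm_sE {g : PSL2Z} (h : g * sE = sE * g) : g = 1 ∨ g = sE := by
  obtain ⟨A, rfl⟩ := QuotientGroup.mk_surjective g
  rw [show (sE : PSL2Z) = QuotientGroup.mk SS from rfl, ← QuotientGroup.mk_mul,
    ← QuotientGroup.mk_mul, mk_eq_mk] at h
  obtain ⟨a, b, c, d, hM, hdet⟩ := SL2_repr A
  rcases h with h | h
  · have h' : (A : Matrix (Fin 2) (Fin 2) ℤ) * (SS : Matrix (Fin 2) (Fin 2) ℤ)
        = (SS : Matrix (Fin 2) (Fin 2) ℤ) * (A : Matrix (Fin 2) (Fin 2) ℤ) :=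
      congrArg Subtype.val h
    rw [hM, SS_coe, Matrix.mul_fin_two, Matrix.mul_fin_two, ← Matrix.ext_iff] at h'
    simp [Fin.forall_fin_two] at h'
    have hc : c = -b := by omega
    have hd : d = a := by omega
    have key : a * a + b * b = 1 := by rw [hc, hd] at hdet; linear_combination hdet
    have hcase : (b = 0 ∧ a * a = 1) ∨ (a = 0 ∧ b * b = 1) := by
      rcases eq_or_ne b 0 with hb | hb
      · left; refine ⟨hb, ?_⟩; rw [hb] at key; linarith
      · right
        have h1 : 0 < b * b := mul_self_pos.mpr hb
        have h2 : 0 ≤ a * a := mul_self_nonneg a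
        have h3 : a * a = 0 := by nlinarith [sq_nonneg (b*b - 1), sq_nonneg (b+1), sq_nonneg (b-1)]
        exact ⟨mul_self_eq_zero.mp h3, by linarith⟩
    rcases hcase with ⟨rfl, ha⟩ | ⟨rfl, hb⟩
    · rcases mul_self_eq_one_iff.mp ha with rfl | rfl
      · left
        have : A = 1 := by
          apply Subtype.ext
          rw [hM, hc, hd, Matrix.SpecialLinearGroup.coe_one, Matrix.one_fin_two]
          norm_num
        rw [this, QuotientGroup.mk_one]
      · left
        have : A = -1 := by
          apply Subtype.ext
          rw [hM, hc, hd, Matrix.SpecialLinearGroup.coe_neg,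
            Matrix.SpecialLinearGroup.coe_one, Matrix.one_fin_two]
          norm_num
        rw [this, mk_neg, QuotientGroup.mk_one]
    · rcases mul_self_eq_one_iff.mp hb with rfl | rfl
      · right
        have : A = SS := by
          apply Subtype.ext
          norm_num [hM, hc, hd, SS_coe]
        rw [this]; rfl
      · right
        have : A = -SS := by
          apply Subtype.ext
          norm_num [hM, hc, hd, Matrix.SpecialLinearGroup.coe_neg, SS_coe]
        rw [this, mk_neg]; rfl
  · exfalso
    have h' : (A : Matrix (Fin 2) (Fin 2) ℤ) * (SS : Matrix (Fin 2) (Fin 2) ℤ)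
        = -((SS : Matrix (Fin 2) (Fin 2) ℤ) * (A : Matrix (Fin 2) (Fin 2) ℤ)) := by
      have := congrArg Subtype.val h
      rwa [Matrix.SpecialLinearGroup.coe_neg, Matrix.SpecialLinearGroup.coe_mul] at this
    rw [hM, SS_coe, ← Matrix.ext_iff] at h'
    simp [Matrix.mul_fin_two, Fin.forall_fin_two, Matrix.neg_apply] at h'
    have hc : c = b := by omega
    have hd : d = -a := by omega
    have key : -(a * a) - b * b = 1 := by rw [hc, hd] at hdet; linear_combination hdet
    nlinarith [mul_self_nonneg a, mul_self_nonneg b]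

lemma comm_s1E {g : PSL2Z} (h : g * s1E = s1E * g) : g = 1 ∨ g = s1E := by
  obtain ⟨A, rfl⟩ := QuotientGroup.mk_surjective g
  rw [show (s1E : PSL2Z) = QuotientGroup.mk S1 from rfl, ← QuotientGroup.mk_mul,
    ← QuotientGroup.mk_mul, mk_eq_mk] at h
  obtain ⟨a, b, c, d, hM, hdet⟩ := SL2_repr A
  rcases h with h | h
  · have h' : (A : Matrix (Fin 2) (Fin 2) ℤ) * (S1 : Matrix (Fin 2) (Fin 2) ℤ)
        = (S1 : Matrix (Fin 2) (Fin 2) ℤ) * (A : Matrix (Fin 2) (Fin 2) ℤ) :=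
      congrArg Subtype.val h
    rw [hM, S1_coe, Matrix.mul_fin_two, Matrix.mul_fin_two, ← Matrix.ext_iff] at h'
    simp [Fin.forall_fin_two] at h'
    have hb : b = -2 * c := by omega
    have hd : d = a - 2 * c := by omega
    have key : (a - c) * (a - c) + c * c = 1 := by
      rw [hb, hd] at hdet; linear_combination hdet
    have hcase : (c = 0 ∧ (a - c) * (a - c) = 1) ∨ (a - c = 0 ∧ c * c = 1) := by
      rcases eq_or_ne c 0 with hc | hc
      · left; refine ⟨hc, ?_⟩; rw [hc] at key ⊢; linarith
      · right
        have h1 : 0 < c * c := mul_self_pos.mpr hc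
        have h2 : 0 ≤ (a - c) * (a - c) := mul_self_nonneg _
        have h3 : (a - c) * (a - c) = 0 := by nlinarith [sq_nonneg (c+1), sq_nonneg (c-1)]
        exact ⟨mul_self_eq_zero.mp h3, by linarith⟩
    rcases hcase with ⟨rfl, ha⟩ | ⟨hac, hc⟩
    · rcases mul_self_eq_one_iff.mp ha with ha | ha
      · left
        have ha' : a = 1 := by omega
        have : A = 1 := by
          apply Subtype.ext
          rw [hM, hb, hd, ha', Matrix.SpecialLinearGroup.coe_one, Matrix.one_fin_two]
          norm_num
        rw [this, QuotientGroup.mk_one]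
      · left
        have ha' : a = -1 := by omega
        have : A = -1 := by
          apply Subtype.ext
          rw [hM, hb, hd, ha', Matrix.SpecialLinearGroup.coe_neg,
            Matrix.SpecialLinearGroup.coe_one, Matrix.one_fin_two]
          norm_num
        rw [this, mk_neg, QuotientGroup.mk_one]
    · rcases mul_self_eq_one_iff.mp hc with rfl | rfl
      · right
        have ha' : a = 1 := by omega
        have : A = S1 := by
          apply Subtype.ext
          rw [hM, hb, hd, ha', S1_coe]; norm_num
        rw [this]; rfl
      · right
        have ha' : a = -1 := by omega
        have : A = -S1 := by
          apply Subtype.ext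
          rw [hM, hb, hd, ha', Matrix.SpecialLinearGroup.coe_neg, S1_coe]; norm_num
        rw [this, mk_neg]; rfl
  · exfalso
    have h' : (A : Matrix (Fin 2) (Fin 2) ℤ) * (S1 : Matrix (Fin 2) (Fin 2) ℤ)
        = -((S1 : Matrix (Fin 2) (Fin 2) ℤ) * (A : Matrix (Fin 2) (Fin 2) ℤ)) := by
      have := congrArg Subtype.val h
      rwa [Matrix.SpecialLinearGroup.coe_neg, Matrix.SpecialLinearGroup.coe_mul] at this
    rw [hM, S1_coe, Matrix.mul_fin_two, Matrix.mul_fin_two, ← Matrix.ext_iff] at h'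
    simp [Fin.forall_fin_two] at h'
    have hb : b = 2 * c - 2 * a := by omega
    have hd : d = -a := by omega
    have key : -((a - c) * (a - c)) - c * c = 1 := by
      rw [hb, hd] at hdet; linear_combination hdet
    nlinarith [mul_self_nonneg (a - c), mul_self_nonneg c]

lemma no_l_sig : ¬ ∃ k : PSL2Z, sig k * k⁻¹ = lE := by
  rintro ⟨k, hk⟩
  obtain ⟨K, rfl⟩ := QuotientGroup.mk_surjective k
  rw [sig_mk, ← QuotientGroup.mk_inv, ← QuotientGroup.mk_mul,
    show (lE : PSL2Z) = QuotientGroup.mk LL from rfl, mk_eq_mk,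
    mul_inv_eq_iff_eq_mul, mul_inv_eq_iff_eq_mul] at hk
  obtain ⟨a, b, c, d, hM, hdet⟩ := SL2_repr K
  rcases hk with h | h
  · have h' : Wmat * (K : Matrix (Fin 2) (Fin 2) ℤ) * Wmat
        = (LL : Matrix (Fin 2) (Fin 2) ℤ) * (K : Matrix (Fin 2) (Fin 2) ℤ) := by
      have := congrArg Subtype.val h
      rwa [Matrix.SpecialLinearGroup.coe_mul] at this
    rw [hM, Wmat, LL_coe, Matrix.mul_fin_two, Matrix.mul_fin_two, ← Matrix.ext_iff] at h'
    simp [Fin.forall_fin_two] at h'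
    have hb : b = 0 := by omega
    have ha : a = -2 * c := by omega
    have had : a * d = 1 := by rw [hb] at hdet; linear_combination hdet
    rcases Int.mul_eq_one_iff_eq_one_or_neg_one.mp had with ⟨ha', _⟩ | ⟨ha', _⟩ <;> omega
  · have h' : Wmat * (K : Matrix (Fin 2) (Fin 2) ℤ) * Wmat
        = -((LL : Matrix (Fin 2) (Fin 2) ℤ) * (K : Matrix (Fin 2) (Fin 2) ℤ)) := by
      have := congrArg Subtype.val h
      rwa [neg_mul, Matrix.SpecialLinearGroup.coe_neg, Matrix.SpecialLinearGroup.coe_mul] at this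
    rw [hM, Wmat, LL_coe, ← Matrix.ext_iff] at h'
    simp [Matrix.mul_fin_two, Fin.forall_fin_two, Matrix.neg_apply] at h'
    have ha : a = 0 := by omega
    have hb : b = -2 * d := by omega
    have : (2 : ℤ) ∣ 1 := ⟨d * c, by rw [ha, hb] at hdet; linear_combination -hdet⟩
    norm_num at this

lemma no_l_tau : ¬ ∃ k : PSL2Z, tau k * k⁻¹ = lE⁻¹ := by
  rintro ⟨k, hk⟩
  obtain ⟨K, rfl⟩ := QuotientGroup.mk_surjective k
  rw [tau_mk, ← QuotientGroup.mk_inv, ← QuotientGroup.mk_mul,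
    show (lE : PSL2Z) = QuotientGroup.mk LL from rfl, ← QuotientGroup.mk_inv, mk_eq_mk,
    mul_inv_eq_iff_eq_mul, mul_inv_eq_iff_eq_mul] at hk
  obtain ⟨a, b, c, d, hM, hdet⟩ := SL2_repr K
  rcases hk with h | h
  · have h' : W1mat * (K : Matrix (Fin 2) (Fin 2) ℤ) * W1mat
        = !![1, 0; -1, 1] * (K : Matrix (Fin 2) (Fin 2) ℤ) := by
      have := congrArg Subtype.val h
      rwa [Matrix.SpecialLinearGroup.coe_mul, LL_inv_coe] at this
    rw [hM, W1mat, Matrix.mul_fin_two, Matrix.mul_fin_two, ← Matrix.ext_iff] at h'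
    simp [Fin.forall_fin_two] at h'
    have hb : b = 0 := by omega
    have hd : d = 2 * a - 2 * c := by omega
    have had : a * d = 1 := by rw [hb] at hdet; linear_combination hdet
    rcases Int.mul_eq_one_iff_eq_one_or_neg_one.mp had with ⟨_, hd'⟩ | ⟨_, hd'⟩ <;> omega
  · have h' : W1mat * (K : Matrix (Fin 2) (Fin 2) ℤ) * W1mat
        = -(!![1, 0; -1, 1] * (K : Matrix (Fin 2) (Fin 2) ℤ)) := by
      have := congrArg Subtype.val h
      rwa [neg_mul, Matrix.SpecialLinearGroup.coe_neg, Matrix.SpecialLinearGroup.coe_mul,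
        LL_inv_coe] at this
    rw [hM, W1mat, ← Matrix.ext_iff] at h'
    simp [Matrix.mul_fin_two, Fin.forall_fin_two, Matrix.neg_apply] at h'
    have hb : b = -2 * a := by omega
    have hd : d = -2 * a := by omega
    have : (2 : ℤ) ∣ 1 := ⟨a * c - a * a, by rw [hb, hd] at hdet; linear_combination -hdet⟩
    norm_num at this
end Computations
section HypPrim

open scoped MatrixGroups

lemma trace_of_mk_eq {δ : PSL2Z} {A B : SL(2, ℤ)} (hA : (QuotientGroup.mk A : PSL2Z) = δ)
    (hB : (QuotientGroup.mk B : PSL2Z) = δ) :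
    Matrix.trace (A : Matrix (Fin 2) (Fin 2) ℤ) = Matrix.trace (B : Matrix (Fin 2) (Fin 2) ℤ)
    ∨ Matrix.trace (A : Matrix (Fin 2) (Fin 2) ℤ) = -Matrix.trace (B : Matrix (Fin 2) (Fin 2) ℤ) := by
  rw [← hB, mk_eq_mk] at hA
  rcases hA with rfl | rfl
  · left; rfl
  · right
    rw [Matrix.SpecialLinearGroup.coe_neg, Matrix.trace_neg]

lemma hyp_ne_one {δ : PSL2Z} (h : IsHyp δ) : δ ≠ 1 := by
  rintro rfl
  obtain ⟨A, hA, htr⟩ := h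
  have h1 : (QuotientGroup.mk (1 : SL(2,ℤ)) : PSL2Z) = 1 := QuotientGroup.mk_one pmOne
  rcases trace_of_mk_eq hA h1 with he | he <;>
  · rw [he] at htr
    norm_num [Matrix.SpecialLinearGroup.coe_one, Matrix.trace_one] at htr

lemma hyp_ne_sE {δ : PSL2Z} (h : IsHyp δ) : δ ≠ sE := by
  rintro rfl
  obtain ⟨A, hA, htr⟩ := h
  rcases trace_of_mk_eq hA (rfl : (QuotientGroup.mk SS : PSL2Z) = sE) with he | he <;>
  · rw [he] at htr
    simp [Matrix.trace_fin_two, SS_coe] at htr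

lemma hyp_ne_s1E {δ : PSL2Z} (h : IsHyp δ) : δ ≠ s1E := by
  rintro rfl
  obtain ⟨A, hA, htr⟩ := h
  rcases trace_of_mk_eq hA (rfl : (QuotientGroup.mk S1 : PSL2Z) = s1E) with he | he <;>
  · rw [he] at htr
    norm_num [Matrix.trace_fin_two, S1_coe] at htr

lemma isHyp_conj {γ δ : PSL2Z} (h : IsHyp γ) (hc : IsConj γ δ) : IsHyp δ := by
  obtain ⟨c, hc⟩ := isConj_iff.mp hc
  obtain ⟨A, hA, htr⟩ := h
  obtain ⟨C, rfl⟩ := QuotientGroup.mk_surjective c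
  refine ⟨C * A * C⁻¹, ?_, ?_⟩
  · rw [← hc, ← hA]
    rw [← QuotientGroup.mk_mul, ← QuotientGroup.mk_inv, ← QuotientGroup.mk_mul]
  · have : Matrix.trace ((C * A * C⁻¹ : SL(2,ℤ)) : Matrix (Fin 2) (Fin 2) ℤ)
        = Matrix.trace (A : Matrix (Fin 2) (Fin 2) ℤ) := by
      rw [Matrix.SpecialLinearGroup.coe_mul, Matrix.SpecialLinearGroup.coe_mul,
        Matrix.trace_mul_comm, ← mul_assoc, ← Matrix.SpecialLinearGroup.coe_mul,
        inv_mul_cancel, Matrix.SpecialLinearGroup.coe_one, one_mul]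
    rw [this]
    exact htr

lemma isPrim_conj {γ δ : PSL2Z} (h : IsPrim γ) (hc : IsConj γ δ) : IsPrim δ := by
  obtain ⟨c, hc⟩ := isConj_iff.mp hc
  rintro ⟨δ', n, hn, hpow⟩
  exact h ⟨c⁻¹ * δ' * c, n, hn, by
    rw [show c⁻¹ * δ' * c = c⁻¹ * δ' * (c⁻¹)⁻¹ from by rw [inv_inv], conj_pow, inv_inv,
      hpow, ← hc]
    group⟩

end HypPrim
section ValueLemmas

/-- `(t + √(t²-4))/2`, the large root of `x² - tx + 1`. -/
noncomputable def lamT (t : ℤ) : ℝ := ((t : ℝ) + Real.sqrt ((t : ℝ)^2 - 4))/2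

/-- The small root. -/
noncomputable def lamT' (t : ℤ) : ℝ := ((t : ℝ) - Real.sqrt ((t : ℝ)^2 - 4))/2

/-- `!![p,q;r,s] = x•1 + y•!![a,b;c,d]`, entrywise. -/
def RepT (a b c d p q r s : ℤ) (x y : ℝ) : Prop :=
  ((q : ℝ) = y * b) ∧ ((r : ℝ) = y * c) ∧ ((p : ℝ) = x + y * a) ∧ ((s : ℝ) = x + y * d)

lemma sq_lamT {t : ℤ} (ht : 2 < |t|) : Real.sqrt ((t : ℝ)^2 - 4) > 0 := by
  apply Real.sqrt_pos.mpr
  have h3 : 3 ≤ |t| := by omega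
  have : (3 : ℝ) ≤ |(t : ℝ)| := by
    rw [← Int.cast_abs]; exact_mod_cast h3
  nlinarith [abs_nonneg (t:ℝ), sq_abs (t:ℝ)]

lemma lamT_add {t : ℤ} : lamT t + lamT' t = (t : ℝ) := by
  rw [lamT, lamT']; ring

lemma lamT_mul {t : ℤ} (ht : 2 < |t|) : lamT t * lamT' t = 1 := by
  rw [lamT, lamT']
  have hnn : (0:ℝ) ≤ (t : ℝ)^2 - 4 := le_of_lt (Real.sqrt_pos.mp (sq_lamT ht))
  have h := Real.sq_sqrt hnn
  nlinarith [h]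

lemma lamT_sq {t : ℤ} (ht : 2 < |t|) : lamT t ^ 2 = (t : ℝ) * lamT t - 1 := by
  have h1 := lamT_add (t := t)
  have h2 := lamT_mul ht
  linear_combination lamT t * h1 - h2

lemma lamT_sub {t : ℤ} : lamT t - lamT' t = Real.sqrt ((t : ℝ)^2 - 4) := by
  rw [lamT, lamT']; ring

/-- Uniqueness of the representation. -/
lemma repT_unique {a b c d p q r s : ℤ} {x y x' y' : ℝ}
    (hdet : a * d - b * c = 1) (ht : 2 < |a + d|)
    (h1 : RepT a b c d p q r s x y) (h2 : RepT a b c d p q r s x' y') :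
    x = x' ∧ y = y' := by
  have hbc : b ≠ 0 ∨ c ≠ 0 := by
    by_contra hcon
    push_neg at hcon
    obtain ⟨rfl, rfl⟩ := hcon
    have had : a * d = 1 := by linarith
    rcases Int.mul_eq_one_iff_eq_one_or_neg_one.mp had with ⟨rfl, rfl⟩ | ⟨rfl, rfl⟩ <;>
      simp at ht
  obtain ⟨e1, e2, e3, e4⟩ := h1
  obtain ⟨f1, f2, f3, f4⟩ := h2
  have hy : y = y' := by
    rcases hbc with hb | hc
    · have hb' : (b : ℝ) ≠ 0 := Int.cast_ne_zero.mpr hb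
      have : y * b = y' * b := by rw [← e1, ← f1]
      exact mul_right_cancel₀ hb' this
    · have hc' : (c : ℝ) ≠ 0 := Int.cast_ne_zero.mpr hc
      have : y * c = y' * c := by rw [← e2, ← f2]
      exact mul_right_cancel₀ hc' this
  refine ⟨?_, hy⟩
  have := e3.symm.trans f3
  rw [hy] at this
  linarith

/-- Existence of the representation for commuting matrices. -/
lemma repT_exists {a b c d p q r s : ℤ}
    (hdet : a * d - b * c = 1) (ht : 2 < |a + d|)
    (hc1 : q * c = b * r) (hc2 : b * (p - s) = q * (a - d)) (hc3 : c * (p - s) = r * (a - d)) :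
    ∃ x y : ℝ, RepT a b c d p q r s x y := by
  rcases eq_or_ne b 0 with rfl | hb
  · have hc : c ≠ 0 := by
      rintro rfl
      have had : a * d = 1 := by linarith
      rcases Int.mul_eq_one_iff_eq_one_or_neg_one.mp had with ⟨rfl, rfl⟩ | ⟨rfl, rfl⟩ <;>
        simp at ht
    have hc' : (c : ℝ) ≠ 0 := Int.cast_ne_zero.mpr hc
    refine ⟨(p : ℝ) - (r : ℝ)/(c : ℝ) * a, (r : ℝ)/(c : ℝ), ?_, ?_, ?_, ?_⟩
    · have hq : q = 0 := by
        rcases mul_eq_zero.mp (by linarith : q * c = 0) with h | h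
        · exact h
        · exact absurd h hc
      rw [hq]; push_cast; ring
    · field_simp
    · push_cast; ring
    · have : (c:ℝ) * ((p:ℝ) - s) = r * ((a:ℝ) - d) := by exact_mod_cast hc3
      field_simp
      nlinarith [this]
  · have hb' : (b : ℝ) ≠ 0 := Int.cast_ne_zero.mpr hb
    refine ⟨(p : ℝ) - (q : ℝ)/(b : ℝ) * a, (q : ℝ)/(b : ℝ), ?_, ?_, ?_, ?_⟩
    · field_simp
    · have : (q:ℝ) * c = b * r := by exact_mod_cast hc1
      field_simp
      nlinarith [this]
    · push_cast; ring
    · have : (b:ℝ) * ((p:ℝ) - s) = q * ((a:ℝ) - d) := by exact_mod_cast hc2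
      field_simp
      nlinarith [this]

/-- The representation of a product. -/
lemma repT_mul {a b c d p q r s p' q' r' s' : ℤ} {x y x' y' : ℝ}
    (hdet : a * d - b * c = 1)
    (h1 : RepT a b c d p q r s x y) (h2 : RepT a b c d p' q' r' s' x' y') :
    RepT a b c d (p*p' + q*r') (p*q' + q*s') (r*p' + s*r') (r*q' + s*s')
      (x*x' - y*y') (x*y' + x'*y + y*y'*(a+d)) := by
  obtain ⟨e1, e2, e3, e4⟩ := h1
  obtain ⟨f1, f2, f3, f4⟩ := h2
  have hdet' : (a:ℝ) * d - b * c = 1 := by exact_mod_cast hdet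
  refine ⟨?_, ?_, ?_, ?_⟩ <;> push_cast
  · rw [e3, f1, e1, f4]; ring
  · rw [e2, f3, e4, f2]; ring
  · rw [e3, f3, e1, f2]; linear_combination (-(y*y')) * hdet'
  · rw [e2, f1, e4, f4]; linear_combination (-(y*y')) * hdet'

/-- The norm identity. -/
lemma repT_det {a b c d p q r s : ℤ} {x y : ℝ}
    (h : RepT a b c d p q r s x y) (hdetU : p * s - q * r = 1) :
    x^2 + x*y*(a+d) + y^2 * (a*d - b*c) = 1 := by
  obtain ⟨e1, e2, e3, e4⟩ := h
  have hr : ((p:ℝ) * s - q * r) = 1 := by exact_mod_cast hdetU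
  rw [e1, e2, e3, e4] at hr
  linear_combination hr

end ValueLemmas
section ValueLemmas2

open scoped MatrixGroups

lemma val_mul_val {t : ℤ} (ht : 2 < |t|) (x y x' y' : ℝ) :
    (x + y * lamT t) * (x' + y' * lamT t)
      = (x*x' - y*y') + (x*y' + x'*y + y*y'*t) * lamT t := by
  have h := lamT_sq ht
  linear_combination (y*y') * h

lemma val_conj_val {t : ℤ} (ht : 2 < |t|) (x y : ℝ) :
    (x + y * lamT t) * (x + y * lamT' t) = x^2 + x*y*t + y^2 := by
  have h1 := lamT_add (t := t)
  have h2 := lamT_mul ht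
  linear_combination (x*y) * h1 + (y^2) * h2

lemma val_unit {a b c d p q r s : ℤ} {x y : ℝ}
    (hdet : a * d - b * c = 1) (ht : 2 < |a + d|)
    (hrep : RepT a b c d p q r s x y) (hdetU : p * s - q * r = 1) :
    (x + y * lamT (a+d)) * (x + y * lamT' (a+d)) = 1 := by
  have h1 := val_conj_val ht x y
  have h2 := repT_det hrep hdetU
  have h3 : ((a:ℝ) * d - b * c) = 1 := by exact_mod_cast hdet
  rw [h1]
  push_cast
  nlinarith [h2, h3]

lemma val_ne_zero {a b c d p q r s : ℤ} {x y : ℝ}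
    (hdet : a * d - b * c = 1) (ht : 2 < |a + d|)
    (hrep : RepT a b c d p q r s x y) (hdetU : p * s - q * r = 1) :
    x + y * lamT (a+d) ≠ 0 :=
  left_ne_zero_of_mul_eq_one (val_unit hdet ht hrep hdetU)

lemma repT_inv {a b c d p q r s : ℤ} {x y : ℝ}
    (hrep : RepT a b c d p q r s x y) :
    RepT a b c d s (-q) (-r) p (x + y*(a+d)) (-y) := by
  obtain ⟨e1, e2, e3, e4⟩ := hrep
  refine ⟨?_, ?_, ?_, ?_⟩ <;> push_cast <;> [skip; skip; rw [e4]; rw [e3]] <;>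
    [rw [e1]; rw [e2]; skip; skip] <;> ring

lemma val_inv_eq {t : ℤ} (x y : ℝ) :
    (x + y*(t:ℝ)) + (-y) * lamT t = x + y * lamT' t := by
  rw [lamT, lamT']; ring

/-- `val = ±1` forces the matrix to be `±1`. -/
lemma val_pm {a b c d p q r s : ℤ} {x y : ℝ}
    (hdet : a * d - b * c = 1) (ht : 2 < |a + d|)
    (hrep : RepT a b c d p q r s x y) (hdetU : p * s - q * r = 1)
    (habs : |x + y * lamT (a+d)| = 1) :
    (q = 0 ∧ r = 0) ∧ ((p = 1 ∧ s = 1) ∨ (p = -1 ∧ s = -1)) := by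
  have hvv := val_unit hdet ht hrep hdetU
  have hy : y = 0 := by
    have hsub := lamT_sub (t := a + d)
    have hsq := sq_lamT ht
    rcases abs_eq (by norm_num : (0:ℝ) ≤ 1) |>.mp habs with hv | hv
    · -- v = 1, so vbar = 1, so y * (lam - lam') = 0
      have hvbar : x + y * lamT' (a+d) = 1 := by
        rw [hv, one_mul] at hvv; exact hvv
      have : y * (lamT (a+d) - lamT' (a+d)) = 0 := by linarith
      rw [hsub] at this
      rcases mul_eq_zero.mp this with h | h
      · exact h
      · exact absurd h (by linarith)
    · have hvbar : x + y * lamT' (a+d) = -1 := by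
        have : (-1 : ℝ) * (x + y * lamT' (a+d)) = 1 := by rw [← hv]; exact hvv
        linarith
      have : y * (lamT (a+d) - lamT' (a+d)) = 0 := by linarith
      rw [hsub] at this
      rcases mul_eq_zero.mp this with h | h
      · exact h
      · exact absurd h (by linarith)
  obtain ⟨e1, e2, e3, e4⟩ := hrep
  rw [hy] at e1 e2 e3 e4 habs
  norm_num at e1 e2 e3 e4 habs
  have hq : q = 0 := by exact_mod_cast e1
  have hr : r = 0 := by exact_mod_cast e2
  refine ⟨⟨hq, hr⟩, ?_⟩
  rcases (abs_eq (by norm_num : (0:ℝ) ≤ 1)).mp habs with hx | hx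
  · left
    constructor
    · exact_mod_cast e3.trans hx
    · exact_mod_cast e4.trans hx
  · right
    constructor
    · have : (p:ℝ) = -1 := e3.trans hx
      exact_mod_cast this
    · have : (s:ℝ) = -1 := e4.trans hx
      exact_mod_cast this

/-- Entry equations for matrices commuting with `A`. -/
lemma comm_entries {A U : SL(2,ℤ)} {a b c d : ℤ}
    (hM : (A : Matrix (Fin 2) (Fin 2) ℤ) = !![a, b; c, d]) (hU : U * A = A * U) :
    ∃ p q r s : ℤ, (U : Matrix (Fin 2) (Fin 2) ℤ) = !![p, q; r, s] ∧ p * s - q * r = 1 ∧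
      q * c = b * r ∧ b * (p - s) = q * (a - d) ∧ c * (p - s) = r * (a - d) := by
  obtain ⟨p, q, r, s, hN, hdetU⟩ := SL2_repr U
  have h' : (U : Matrix (Fin 2) (Fin 2) ℤ) * (A : Matrix (Fin 2) (Fin 2) ℤ)
      = (A : Matrix (Fin 2) (Fin 2) ℤ) * (U : Matrix (Fin 2) (Fin 2) ℤ) :=
    congrArg Subtype.val hU
  rw [hN, hM, Matrix.mul_fin_two, Matrix.mul_fin_two, ← Matrix.ext_iff] at h'
  have g1 := h' 0 0
  have g2 := h' 0 1
  have g3 := h' 1 0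
  simp at g1 g2 g3
  exact ⟨p, q, r, s, hN, hdetU, by linarith, by linarith, by linarith⟩

end ValueLemmas2
lemma abs_add_inv_bounds {v : ℝ} (h1 : 5/4 < |v|) (h2 : |v| < 3/2) (hne : v ≠ 0) :
    2 < |v + v⁻¹| ∧ |v + v⁻¹| < 3 := by
  have habs : |v + v⁻¹| = |v| + |v|⁻¹ := by
    rcases lt_or_gt_of_ne hne with h | h
    · have hinv : v⁻¹ < 0 := inv_lt_zero.mpr h
      have hsum : v + v⁻¹ < 0 := by linarith
      rw [abs_of_neg hsum, abs_of_neg h, inv_neg]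
      ring
    · have hinv : 0 < v⁻¹ := inv_pos.mpr h
      rw [abs_of_pos (by linarith), abs_of_pos h]
  rw [habs]
  have hupos : 0 < |v| := abs_pos.mpr hne
  have huinv : |v| * |v|⁻¹ = 1 := mul_inv_cancel₀ (ne_of_gt hupos)
  constructor
  · have h3 : 0 < |v| - 1 := by linarith
    nlinarith [mul_pos h3 h3, huinv]
  · have : |v|⁻¹ < 4/5 := by nlinarith [huinv]
    linarith
section Centralizer

open scoped MatrixGroups

theorem centralizer_hyp {δ : PSL2Z} (hp : IsPrim δ) (hh : IsHyp δ) :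
    ∀ u : PSL2Z, u * δ = δ * u → u ∈ Subgroup.zpowers δ := by
  obtain ⟨A, hA, htr0⟩ := hh
  have hhyp' : IsHyp δ := ⟨A, hA, htr0⟩
  obtain ⟨a, b, c, d, hM, hdet⟩ := SL2_repr A
  have htr : 2 < |a + d| := by
    rw [hM] at htr0
    simpa [Matrix.trace_fin_two] using htr0
  -- lifting commuting elements
  have lift_comm : ∀ u : PSL2Z, u * δ = δ * u →
      ∃ U : SL(2,ℤ), (QuotientGroup.mk U : PSL2Z) = u ∧ U * A = A * U := by
    intro u hu
    obtain ⟨U, rfl⟩ := QuotientGroup.mk_surjective u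
    rw [← hA, ← QuotientGroup.mk_mul, ← QuotientGroup.mk_mul, mk_eq_mk] at hu
    rcases hu with h | h
    · exact ⟨U, rfl, h⟩
    · exfalso
      have h2 : U * A * U⁻¹ = -A := by
        rw [h, neg_mul, mul_assoc, mul_inv_cancel, mul_one]
      have tr1 : Matrix.trace ((U * A * U⁻¹ : SL(2,ℤ)) : Matrix (Fin 2) (Fin 2) ℤ)
          = Matrix.trace (A : Matrix (Fin 2) (Fin 2) ℤ) := by
        rw [Matrix.SpecialLinearGroup.coe_mul, Matrix.SpecialLinearGroup.coe_mul,
          Matrix.trace_mul_comm, ← mul_assoc, ← Matrix.SpecialLinearGroup.coe_mul,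
          inv_mul_cancel, Matrix.SpecialLinearGroup.coe_one, one_mul]
      rw [h2, Matrix.SpecialLinearGroup.coe_neg, Matrix.trace_neg, hM] at tr1
      simp [Matrix.trace_fin_two] at tr1
      have htr' : a + d ≠ 0 := abs_pos.mp (by linarith)
      omega
  have mem_of_comm : ∀ U : SL(2,ℤ), U * A = A * U →
      ∃ (p q r s : ℤ) (x y : ℝ), ((U : Matrix (Fin 2) (Fin 2) ℤ) = !![p,q;r,s]) ∧
        p*s - q*r = 1 ∧ RepT a b c d p q r s x y := by
    intro U hU
    obtain ⟨p, q, r, s, hN, hdU, g1, g2, g3⟩ := comm_entries hM hU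
    obtain ⟨x, y, hrep⟩ := repT_exists hdet htr g1 g2 g3
    exact ⟨p, q, r, s, x, y, hN, hdU, hrep⟩
  -- the additive subgroup of logarithms of absolute values
  let S : AddSubgroup ℝ :=
  { carrier := {z | ∃ (U : SL(2,ℤ)) (p q r s : ℤ) (x y : ℝ),
      U * A = A * U ∧ ((U : Matrix (Fin 2) (Fin 2) ℤ) = !![p,q;r,s]) ∧ p*s - q*r = 1 ∧
      RepT a b c d p q r s x y ∧ z = Real.log |x + y * lamT (a+d)|}
    zero_mem' := by
      refine ⟨1, 1, 0, 0, 1, 1, 0, by rw [one_mul, mul_one], ?_, by ring, ?_, by norm_num⟩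
      · rw [Matrix.SpecialLinearGroup.coe_one, Matrix.one_fin_two]
      · refine ⟨by norm_num, by norm_num, by norm_num, by norm_num⟩
    add_mem' := by
      rintro z1 z2 ⟨U, p, q, r, s, x, y, hU, hN, hdU, hrep, rfl⟩
        ⟨V, p', q', r', s', x', y', hV, hNV, hdV, hrepV, rfl⟩
      have hUV : (U * V) * A = A * (U * V) := by
        rw [mul_assoc, hV, ← mul_assoc, hU, mul_assoc]
      have hcoe : ((U * V : SL(2,ℤ)) : Matrix (Fin 2) (Fin 2) ℤ)
          = !![p*p' + q*r', p*q' + q*s'; r*p' + s*r', r*q' + s*s'] := by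
        rw [Matrix.SpecialLinearGroup.coe_mul, hN, hNV, Matrix.mul_fin_two]
      have hDU : (p*p' + q*r') * (r*q' + s*s') - (p*q' + q*s') * (r*p' + s*r') = 1 := by
        have hD := (U * V).property
        rw [hcoe, Matrix.det_fin_two_of] at hD
        linarith
      refine ⟨U * V, _, _, _, _, _, _, hUV, hcoe, hDU, repT_mul hdet hrep hrepV, ?_⟩
      have hv1 := val_ne_zero hdet htr hrep hdU
      have hv2 := val_ne_zero hdet htr hrepV hdV
      have hmul : (x + y * lamT (a+d)) * (x' + y' * lamT (a+d))
          = x * x' - y * y' + (x * y' + x' * y + y * y' * ((a:ℝ)+(d:ℝ))) * lamT (a+d) := by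
        have h := lamT_sq htr
        push_cast at h
        linear_combination (y*y') * h
      rw [← hmul, abs_mul,
        Real.log_mul (abs_ne_zero.mpr hv1) (abs_ne_zero.mpr hv2)]
    neg_mem' := by
      rintro z ⟨U, p, q, r, s, x, y, hU, hN, hdU, hrep, rfl⟩
      have hC : Commute U A := hU
      have hUinv : U⁻¹ * A = A * U⁻¹ := hC.inv_left.eq
      have hcoe : ((U⁻¹ : SL(2,ℤ)) : Matrix (Fin 2) (Fin 2) ℤ) = !![s, -q; -r, p] := by
        rw [Matrix.SpecialLinearGroup.coe_inv, hN, Matrix.adjugate_fin_two_of]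
      refine ⟨U⁻¹, s, -q, -r, p, x + y*(a+d), -y, hUinv, hcoe, by linarith,
        repT_inv hrep, ?_⟩
      have hrw : x + y*((a:ℝ)+(d:ℝ)) + -y * lamT (a+d) = x + y * lamT' (a+d) := by
        rw [lamT, lamT']; push_cast; ring
      rw [hrw]
      have hvv := val_unit hdet htr hrep hdU
      have : x + y * lamT' (a+d) = (x + y * lamT (a+d))⁻¹ :=
        (inv_eq_of_mul_eq_one_right hvv).symm
      rw [this, abs_inv, Real.log_inv] }
  -- dichotomy
  rcases AddSubgroup.dense_or_cyclic S with hdense | ⟨g, hgen⟩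
  · exfalso
    have hlt : Real.log (5/4) < Real.log (3/2) := Real.log_lt_log (by norm_num) (by norm_num)
    obtain ⟨z, hzS, hz⟩ := dense_iff_exists_between.mp hdense _ _ hlt
    obtain ⟨U, p, q, r, s, x, y, hU, hN, hdU, hrep, rfl⟩ := hzS
    have hvne := val_ne_zero hdet htr hrep hdU
    have hvpos : 0 < |x + y * lamT (a+d)| := abs_pos.mpr hvne
    have h1 : 5/4 < |x + y * lamT (a+d)| := by
      have := hz.1
      rwa [Real.log_lt_log_iff (by norm_num) hvpos] at this
    have h2 : |x + y * lamT (a+d)| < 3/2 := by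
      have := hz.2
      rwa [Real.log_lt_log_iff hvpos (by norm_num)] at this
    have hvv := val_unit hdet htr hrep hdU
    have hw : x + y * lamT' (a+d) = (x + y * lamT (a+d))⁻¹ :=
      (inv_eq_of_mul_eq_one_right hvv).symm
    have htr_id : ((p:ℝ) + s) = (x + y * lamT (a+d)) + (x + y * lamT' (a+d)) := by
      obtain ⟨e1, e2, e3, e4⟩ := hrep
      have hadd := lamT_add (t := a+d)
      push_cast at hadd
      rw [e3, e4]
      linear_combination (-y) * hadd
    rw [hw] at htr_id
    have hm23 := abs_add_inv_bounds h1 h2 hvne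
    rw [← htr_id] at hm23
    have hcast : |((p + s : ℤ) : ℝ)| = |(p:ℝ) + s| := by push_cast; rfl
    have hint : 2 < |p + s| ∧ |p + s| < 3 := by
      constructor
      · have := hm23.1
        rw [← hcast] at this
        exact_mod_cast (by exact_mod_cast this : (2:ℝ) < ((|p+s| : ℤ) : ℝ))
      · have := hm23.2
        rw [← hcast] at this
        exact_mod_cast (by exact_mod_cast this : ((|p+s| : ℤ) : ℝ) < 3)
    omega
  -- cyclic case
  have hgS : g ∈ S := by
    have : g ∈ AddSubgroup.closure {g} := AddSubgroup.subset_closure (Set.mem_singleton g)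
    rwa [← hgen] at this
  obtain ⟨C₀, p₀, q₀, r₀, s₀, x₀, y₀, hC₀, hN₀, hd₀, hrep₀, hg⟩ := hgS
  have hv₀ne := val_ne_zero hdet htr hrep₀ hd₀
  -- data for natural powers
  have pow_mem : ∀ n : ℕ, ∃ (p q r s : ℤ) (x y : ℝ),
      (C₀^n) * A = A * (C₀^n) ∧
      ((C₀^n : SL(2,ℤ)) : Matrix (Fin 2) (Fin 2) ℤ) = !![p,q;r,s] ∧
      p*s - q*r = 1 ∧ RepT a b c d p q r s x y ∧
      x + y * lamT (a+d) = (x₀ + y₀ * lamT (a+d))^n := by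
    intro n
    induction n with
    | zero =>
      refine ⟨1, 0, 0, 1, 1, 0, by simp, ?_, by ring,
        ⟨by norm_num, by norm_num, by norm_num, by norm_num⟩, by norm_num⟩
      rw [pow_zero, Matrix.SpecialLinearGroup.coe_one, Matrix.one_fin_two]
    | succ n ih =>
      obtain ⟨p, q, r, s, x, y, hcm, hcoe, hdU, hrep, hval⟩ := ih
      have hcm' : (C₀^(n+1)) * A = A * (C₀^(n+1)) := by
        rw [pow_succ, mul_assoc, hC₀, ← mul_assoc, hcm, mul_assoc]
      have hcoe' : ((C₀^(n+1) : SL(2,ℤ)) : Matrix (Fin 2) (Fin 2) ℤ)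
          = !![p*p₀ + q*r₀, p*q₀ + q*s₀; r*p₀ + s*r₀, r*q₀ + s*s₀] := by
        rw [pow_succ, Matrix.SpecialLinearGroup.coe_mul, hcoe, hN₀, Matrix.mul_fin_two]
      have hdU' : (p*p₀ + q*r₀) * (r*q₀ + s*s₀) - (p*q₀ + q*s₀) * (r*p₀ + s*r₀) = 1 := by
        have hD := (C₀^(n+1)).property
        rw [hcoe', Matrix.det_fin_two_of] at hD
        linarith
      refine ⟨_, _, _, _, _, _, hcm', hcoe', hdU', repT_mul hdet hrep hrep₀, ?_⟩
      have hmul : (x + y * lamT (a+d)) * (x₀ + y₀ * lamT (a+d))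
          = x * x₀ - y * y₀ + (x * y₀ + x₀ * y + y * y₀ * ((a:ℝ)+(d:ℝ))) * lamT (a+d) := by
        have h := lamT_sq htr
        push_cast at h
        linear_combination (y*y₀) * h
      rw [← hmul, hval, pow_succ]
  -- data for integer powers, with absolute value
  have zpow_mem : ∀ n : ℤ, ∃ (p q r s : ℤ) (x y : ℝ),
      (C₀^n) * A = A * (C₀^n) ∧
      ((C₀^n : SL(2,ℤ)) : Matrix (Fin 2) (Fin 2) ℤ) = !![p,q;r,s] ∧
      p*s - q*r = 1 ∧ RepT a b c d p q r s x y ∧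
      |x + y * lamT (a+d)| = |x₀ + y₀ * lamT (a+d)| ^ n := by
    intro n
    rcases le_or_gt 0 n with hn | hn
    · obtain ⟨p, q, r, s, x, y, hcm, hcoe, hdU, hrep, hval⟩ := pow_mem n.toNat
      rw [show (C₀ ^ n.toNat : SL(2,ℤ)) = C₀ ^ n from by
        rw [← zpow_natCast, Int.toNat_of_nonneg hn]] at hcm hcoe
      refine ⟨p, q, r, s, x, y, hcm, hcoe, hdU, hrep, ?_⟩
      rw [hval, abs_pow, ← zpow_natCast |x₀ + y₀ * lamT (a+d)|, Int.toNat_of_nonneg hn]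
    · obtain ⟨p, q, r, s, x, y, hcm, hcoe, hdU, hrep, hval⟩ := pow_mem (-n).toNat
      have hpow : (C₀ ^ (-n).toNat : SL(2,ℤ)) = C₀ ^ (-n) := by
        rw [← zpow_natCast, Int.toNat_of_nonneg (by omega)]
      rw [hpow] at hcm hcoe
      have hCn : (C₀ ^ n : SL(2,ℤ)) = (C₀ ^ (-n))⁻¹ := by
        rw [← _root_.zpow_neg, neg_neg]
      have hC : Commute (C₀ ^ (-n)) A := hcm
      have hcm' : (C₀^n) * A = A * (C₀^n) := by
        rw [hCn]; exact hC.inv_left.eq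
      have hcoe' : ((C₀^n : SL(2,ℤ)) : Matrix (Fin 2) (Fin 2) ℤ) = !![s, -q; -r, p] := by
        rw [hCn, Matrix.SpecialLinearGroup.coe_inv, hcoe, Matrix.adjugate_fin_two_of]
      refine ⟨s, -q, -r, p, x + y*((a:ℝ)+(d:ℝ)), -y, hcm', hcoe', by linarith, ?_, ?_⟩
      · have := repT_inv hrep
        convert this using 2 <;> (push_cast; ring)
      · have hrw : x + y*((a:ℝ)+(d:ℝ)) + -y * lamT (a+d) = x + y * lamT' (a+d) := by
          rw [lamT, lamT']; push_cast; ring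
        rw [hrw]
        have hvv := val_unit hdet htr hrep hdU
        have hthis : x + y * lamT' (a+d) = (x + y * lamT (a+d))⁻¹ :=
          (inv_eq_of_mul_eq_one_right hvv).symm
        rw [hthis, abs_inv, hval, abs_pow]
        rw [← zpow_natCast |x₀ + y₀ * lamT (a+d)|, Int.toNat_of_nonneg (by omega : (0:ℤ) ≤ -n),
          ← _root_.zpow_neg, neg_neg]
  -- identification of commuting elements with powers of C₀
  have key : ∀ U : SL(2,ℤ), U * A = A * U → ∃ n : ℤ, U = C₀^n ∨ U = -C₀^n := by
    intro U hU
    obtain ⟨p, q, r, s, x, y, hN, hdU, hrep⟩ := mem_of_comm U hU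
    have hzS : Real.log |x + y * lamT (a+d)| ∈ S := ⟨U, p, q, r, s, x, y, hU, hN, hdU, hrep, rfl⟩
    rw [hgen] at hzS
    obtain ⟨n, hn⟩ := AddSubgroup.mem_closure_singleton.mp hzS
    refine ⟨n, ?_⟩
    obtain ⟨pe, qe, re, se, xe, ye, hcmE, hcoeE, hdE, hrepE, hvalE⟩ := zpow_mem n
    -- |vU| = |vE|
    have hvUne := val_ne_zero hdet htr hrep hdU
    have hvEne := val_ne_zero hdet htr hrepE hdE
    have hlogeq : Real.log |x + y * lamT (a+d)| = Real.log |xe + ye * lamT (a+d)| := by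
      rw [← hn, hvalE, Real.log_zpow, ← hg, zsmul_eq_mul]
    have habs_eq : |x + y * lamT (a+d)| = |xe + ye * lamT (a+d)| := by
      have e1 : Real.exp (Real.log |x + y * lamT (a+d)|) = |x + y * lamT (a+d)| :=
        Real.exp_log (abs_pos.mpr hvUne)
      have e2 : Real.exp (Real.log |xe + ye * lamT (a+d)|) = |xe + ye * lamT (a+d)| :=
        Real.exp_log (abs_pos.mpr hvEne)
      rw [← e1, ← e2, hlogeq]
    -- consider D := U * (C₀^n)⁻¹
    set E := C₀ ^ n with hEdef
    have hCE : Commute E A := hcmE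
    have hEinvcomm : E⁻¹ * A = A * E⁻¹ := hCE.inv_left.eq
    have hcoeEinv : ((E⁻¹ : SL(2,ℤ)) : Matrix (Fin 2) (Fin 2) ℤ) = !![se, -qe; -re, pe] := by
      rw [Matrix.SpecialLinearGroup.coe_inv, hcoeE, Matrix.adjugate_fin_two_of]
    have hrepEinv : RepT a b c d se (-qe) (-re) pe (xe + ye*((a:ℝ)+(d:ℝ))) (-ye) := by
      have := repT_inv hrepE
      convert this using 2 <;> (push_cast; ring)
    have hDcomm : (U * E⁻¹) * A = A * (U * E⁻¹) := by
      rw [mul_assoc, hEinvcomm, ← mul_assoc, hU, mul_assoc]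
    have hcoeD : ((U * E⁻¹ : SL(2,ℤ)) : Matrix (Fin 2) (Fin 2) ℤ)
        = !![p*se + q*(-re), p*(-qe) + q*pe; r*se + s*(-re), r*(-qe) + s*pe] := by
      rw [Matrix.SpecialLinearGroup.coe_mul, hN, hcoeEinv, Matrix.mul_fin_two]
    have hdD : (p*se + q*(-re)) * (r*(-qe) + s*pe) - (p*(-qe) + q*pe) * (r*se + s*(-re)) = 1 := by
      have hD := (U * E⁻¹).property
      rw [hcoeD, Matrix.det_fin_two_of] at hD
      linarith
    have hrepD := repT_mul hdet hrep hrepEinv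
    -- value of D
    have hmul : (x + y * lamT (a+d)) * ((xe + ye*((a:ℝ)+(d:ℝ))) + (-ye) * lamT (a+d))
        = x * (xe + ye*((a:ℝ)+(d:ℝ))) - y * (-ye)
          + (x * (-ye) + (xe + ye*((a:ℝ)+(d:ℝ))) * y + y * (-ye) * ((a:ℝ)+(d:ℝ))) * lamT (a+d) := by
      have h := lamT_sq htr
      push_cast at h
      linear_combination (y*(-ye)) * h
    have hinvval : (xe + ye*((a:ℝ)+(d:ℝ))) + (-ye) * lamT (a+d)
        = (xe + ye * lamT (a+d))⁻¹ := by
      have hrw : xe + ye*((a:ℝ)+(d:ℝ)) + -ye * lamT (a+d) = xe + ye * lamT' (a+d) := by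
        rw [lamT, lamT']; push_cast; ring
      rw [hrw]
      exact (inv_eq_of_mul_eq_one_right (val_unit hdet htr hrepE hdE)).symm
    have habsD : |x * (xe + ye*((a:ℝ)+(d:ℝ))) - y * (-ye)
          + (x * (-ye) + (xe + ye*((a:ℝ)+(d:ℝ))) * y + y * (-ye) * ((a:ℝ)+(d:ℝ))) * lamT (a+d)| = 1 := by
      rw [← hmul, abs_mul, hinvval, abs_inv, habs_eq,
        mul_inv_cancel₀ (abs_ne_zero.mpr hvEne)]
    have hpm := val_pm hdet htr hrepD hdD habsD
    obtain ⟨⟨hq0, hr0⟩, hps⟩ := hpm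
    rcases hps with ⟨hp1, hs1⟩ | ⟨hp1, hs1⟩
    · left
      have hD1 : U * E⁻¹ = 1 := by
        apply Subtype.ext
        rw [hcoeD, hq0, hr0, hp1, hs1, Matrix.SpecialLinearGroup.coe_one, Matrix.one_fin_two]
      rw [← mul_inv_eq_one]
      exact hD1
    · right
      have hD1 : U * E⁻¹ = -1 := by
        apply Subtype.ext
        rw [hcoeD, hq0, hr0, hp1, hs1, Matrix.SpecialLinearGroup.coe_neg,
          Matrix.SpecialLinearGroup.coe_one, Matrix.one_fin_two]
        norm_num
      have : U = -1 * E := by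
        rw [← hD1, inv_mul_cancel_right]
      rw [this, neg_one_mul]
  -- conclude at the PSL level
  have main : ∀ u : PSL2Z, u * δ = δ * u →
      u ∈ Subgroup.zpowers (QuotientGroup.mk C₀ : PSL2Z) := by
    intro u hu
    obtain ⟨U, rfl, hUA⟩ := lift_comm u hu
    obtain ⟨n, h | h⟩ := key U hUA
    · refine ⟨n, ?_⟩
      show (QuotientGroup.mk C₀ : PSL2Z) ^ n = QuotientGroup.mk U
      rw [← QuotientGroup.mk_zpow, h]
    · refine ⟨n, ?_⟩
      show (QuotientGroup.mk C₀ : PSL2Z) ^ n = QuotientGroup.mk U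
      rw [← QuotientGroup.mk_zpow, h, mk_neg]
  obtain ⟨k, hk⟩ := Subgroup.mem_zpowers_iff.mp (main δ rfl)
  have hk1 : k = 1 ∨ k = -1 := by
    by_contra hcon
    push_neg at hcon
    rcases lt_trichotomy k 0 with hneg | hzero | hposi
    · have hk2 : k ≤ -2 := by omega
      refine hp ⟨(QuotientGroup.mk C₀ : PSL2Z)⁻¹, (-k).toNat, by omega, ?_⟩
      rw [inv_pow, ← zpow_natCast, Int.toNat_of_nonneg (by omega), ← _root_.zpow_neg, neg_neg]
      exact hk
    · rw [hzero, zpow_zero] at hk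
      exact hyp_ne_one hhyp' hk.symm
    · have hk2 : 2 ≤ k := by omega
      refine hp ⟨(QuotientGroup.mk C₀ : PSL2Z), k.toNat, by omega, ?_⟩
      rw [← zpow_natCast, Int.toNat_of_nonneg (by omega)]
      exact hk
  intro u hu
  obtain ⟨n, hn⟩ := Subgroup.mem_zpowers_iff.mp (main u hu)
  rcases hk1 with rfl | rfl
  · rw [zpow_one] at hk
    refine ⟨n, ?_⟩
    show δ ^ n = u
    rw [← hk]; exact hn
  · rw [_root_.zpow_neg, zpow_one] at hk
    refine ⟨-n, ?_⟩
    show δ ^ (-n) = u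
    rw [← hk, _root_.inv_zpow, _root_.zpow_neg, inv_inv]
    exact hn

end Centralizer
section MainCount

lemma main_count (φ : PSL2Z →* PSL2Z) (hφ : ∀ g, φ (φ g) = g)
    (sF : PSL2Z) (hfix : ∀ g : PSL2Z, φ g = g ↔ g = 1 ∨ g = sF)
    (hcs : ∀ g : PSL2Z, g * sF = sF * g → g = 1 ∨ g = sF)
    (lF : PSL2Z) (hnl : ¬ ∃ k : PSL2Z, φ k * k⁻¹ = lF)
    (γ : PSL2Z) (hprim : IsPrim γ) (hhyp : IsHyp γ)
    (δ₀ : PSL2Z) (hconj₀ : IsConj γ δ₀) (h₀ : φ δ₀ = δ₀⁻¹)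
    (δ₁ : PSL2Z) (hconj₁ : IsConj γ δ₁) (h₁ : φ δ₁ = lF⁻¹ * δ₁⁻¹ * lF) :
    {δ : PSL2Z | IsConj γ δ ∧ φ δ = δ⁻¹} = {δ₀, sF * δ₀ * sF⁻¹} := by
  have hC : ∀ u : PSL2Z, u * δ₀ = δ₀ * u → u ∈ Subgroup.zpowers δ₀ :=
    centralizer_hyp (isPrim_conj hprim hconj₀) (isHyp_conj hhyp hconj₀)
  have hφsF : φ sF = sF := (hfix sF).mpr (Or.inr rfl)
  have hφδ₀pow : ∀ m : ℤ, φ (δ₀ ^ m) = δ₀ ^ (-m) := by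
    intro m
    rw [_root_.map_zpow, h₀, _root_.inv_zpow, ← _root_.zpow_neg]
  ext δ
  simp only [Set.mem_setOf_eq, Set.mem_insert_iff, Set.mem_singleton_iff]
  constructor
  · rintro ⟨hcd, hamb⟩
    obtain ⟨q, hq⟩ := isConj_iff.mp (hconj₀.symm.trans hcd)
    obtain ⟨p, hpp⟩ := isConj_iff.mp (hconj₀.symm.trans hconj₁)
    -- q⁻¹ * φ q is a power of δ₀
    have hqc : (q⁻¹ * φ q) * δ₀ = δ₀ * (q⁻¹ * φ q) := by
      have h3 : φ (q * δ₀ * q⁻¹) = (q * δ₀ * q⁻¹)⁻¹ := by rw [hq]; exact hamb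
      rw [_root_.map_mul, _root_.map_mul, h₀, _root_.map_inv] at h3
      have h2 : φ q * δ₀⁻¹ * (φ q)⁻¹ = q * δ₀⁻¹ * q⁻¹ := by rw [h3]; group
      have h4 : (q⁻¹ * φ q) * δ₀⁻¹ * (q⁻¹ * φ q)⁻¹ = δ₀⁻¹ := by
        calc (q⁻¹ * φ q) * δ₀⁻¹ * (q⁻¹ * φ q)⁻¹
            = q⁻¹ * (φ q * δ₀⁻¹ * (φ q)⁻¹) * q := by group
          _ = q⁻¹ * (q * δ₀⁻¹ * q⁻¹) * q := by rw [h2]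
          _ = δ₀⁻¹ := by group
      have h5 : Commute (q⁻¹ * φ q) δ₀⁻¹ := by
        show _ * _ = _ * _
        conv_rhs => rw [← h4]
        group
      have h6 := h5.inv_right
      rw [inv_inv] at h6
      exact h6.eq
    obtain ⟨n, hn⟩ := Subgroup.mem_zpowers_iff.mp (hC _ hqc)
    -- p⁻¹ * lF * φ p is a power of δ₀
    have hpc : (p⁻¹ * lF * φ p) * δ₀ = δ₀ * (p⁻¹ * lF * φ p) := by
      have h3 : φ (p * δ₀ * p⁻¹) = lF⁻¹ * (p * δ₀ * p⁻¹)⁻¹ * lF := by rw [hpp]; exact h₁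
      rw [_root_.map_mul, _root_.map_mul, h₀, _root_.map_inv] at h3
      have h4 : (p⁻¹ * lF * φ p) * δ₀⁻¹ * (p⁻¹ * lF * φ p)⁻¹ = δ₀⁻¹ := by
        calc (p⁻¹ * lF * φ p) * δ₀⁻¹ * (p⁻¹ * lF * φ p)⁻¹
            = p⁻¹ * lF * (φ p * δ₀⁻¹ * (φ p)⁻¹) * lF⁻¹ * p := by group
          _ = p⁻¹ * lF * (lF⁻¹ * (p * δ₀ * p⁻¹)⁻¹ * lF) * lF⁻¹ * p := by rw [h3]
          _ = δ₀⁻¹ := by group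
      have h5 : Commute (p⁻¹ * lF * φ p) δ₀⁻¹ := by
        show _ * _ = _ * _
        conv_rhs => rw [← h4]
        group
      have h6 := h5.inv_right
      rw [inv_inv] at h6
      exact h6.eq
    obtain ⟨m, hm⟩ := Subgroup.mem_zpowers_iff.mp (hC _ hpc)
    have hfq : φ q = q * δ₀ ^ n := by rw [hn]; group
    have hfp : φ p = lF⁻¹ * p * δ₀ ^ m := by rw [hm]; group
    have hm_odd : Odd m := by
      by_contra hme
      rw [Int.not_odd_iff_even] at hme
      obtain ⟨i, hi⟩ := hme
      apply hnl
      refine ⟨φ (p * δ₀ ^ i), ?_⟩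
      have hfp' : φ (p * δ₀ ^ i) = lF⁻¹ * (p * δ₀ ^ i) := by
        rw [_root_.map_mul, hfp, hφδ₀pow, show m = i + i from hi, _root_.zpow_add]
        group
      rw [hφ (p * δ₀ ^ i), hfp']
      group
    have hn_even : Even n := by
      by_contra hne
      rw [Int.not_even_iff_odd] at hne
      obtain ⟨i, hi⟩ := hne
      obtain ⟨j, hj⟩ := hm_odd
      apply hnl
      refine ⟨φ (p * δ₀ ^ (j - i) * q⁻¹), ?_⟩
      have hfk : φ (p * δ₀ ^ (j - i) * q⁻¹) = lF⁻¹ * (p * δ₀ ^ (j - i) * q⁻¹) := by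
        rw [_root_.map_mul, _root_.map_mul, hfp, hφδ₀pow, _root_.map_inv, hfq,
          show m = (j - i) + n + (j - i) from by omega, _root_.zpow_add, _root_.zpow_add]
        group
      rw [hφ (p * δ₀ ^ (j - i) * q⁻¹), hfk]
      group
    obtain ⟨i, hi⟩ := hn_even
    have hfg : φ (q * δ₀ ^ i) = q * δ₀ ^ i := by
      rw [_root_.map_mul, hfq, hφδ₀pow, show n = i + i from hi, _root_.zpow_add]
      group
    rcases (hfix (q * δ₀ ^ i)).mp hfg with hg1 | hgs
    · left
      have hq' : q = δ₀ ^ (-i) := by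
        rw [_root_.zpow_neg]
        calc q = q * δ₀ ^ i * (δ₀ ^ i)⁻¹ := by group
          _ = (δ₀ ^ i)⁻¹ := by rw [hg1]; group
      rw [← hq, hq']
      group
    · right
      have hq' : q = sF * (δ₀ ^ i)⁻¹ := by
        calc q = q * δ₀ ^ i * (δ₀ ^ i)⁻¹ := by group
          _ = sF * (δ₀ ^ i)⁻¹ := by rw [hgs]
      rw [← hq, hq']
      group
  · rintro (rfl | rfl)
    · exact ⟨hconj₀, h₀⟩
    · refine ⟨hconj₀.trans (isConj_iff.mpr ⟨sF, rfl⟩), ?_⟩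
      rw [_root_.map_mul, _root_.map_mul, h₀, hφsF, _root_.map_inv, hφsF]
      group

lemma main_card (φ : PSL2Z →* PSL2Z) (hφ : ∀ g, φ (φ g) = g)
    (sF : PSL2Z) (hfix : ∀ g : PSL2Z, φ g = g ↔ g = 1 ∨ g = sF)
    (hcs : ∀ g : PSL2Z, g * sF = sF * g → g = 1 ∨ g = sF)
    (lF : PSL2Z) (hnl : ¬ ∃ k : PSL2Z, φ k * k⁻¹ = lF)
    (γ : PSL2Z) (hprim : IsPrim γ) (hhyp : IsHyp γ)
    (δ₀ : PSL2Z) (hconj₀ : IsConj γ δ₀) (h₀ : φ δ₀ = δ₀⁻¹)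
    (δ₁ : PSL2Z) (hconj₁ : IsConj γ δ₁) (h₁ : φ δ₁ = lF⁻¹ * δ₁⁻¹ * lF)
    (hsFne : ∀ δ : PSL2Z, IsHyp δ → δ ≠ sF) :
    {δ : PSL2Z | IsConj γ δ ∧ φ δ = δ⁻¹}.ncard = 2 := by
  rw [main_count φ hφ sF hfix hcs lF hnl γ hprim hhyp δ₀ hconj₀ h₀ δ₁ hconj₁ h₁]
  apply Set.ncard_pair
  intro heq
  have hcomm : δ₀ * sF = sF * δ₀ := by
    have h2 : δ₀ * sF = sF * δ₀ * sF⁻¹ * sF := by rw [← heq]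
    rw [h2]; group
  have hhyp₀ : IsHyp δ₀ := isHyp_conj hhyp hconj₀
  rcases hcs δ₀ hcomm with h | h
  · exact hyp_ne_one hhyp₀ h
  · exact hsFne δ₀ hhyp₀ h

end MainCount

theorem two_ambiguous_conjugates_of_each_kind' (γ : PSL2Z)
    (hprim : IsPrim γ) (hhyp : IsHyp γ)
    (h1 : ∃ δ : PSL2Z, IsConj γ δ ∧ AmbFst δ)
    (h2 : ∃ δ : PSL2Z, IsConj γ δ ∧ AmbSnd δ) :
    {δ : PSL2Z | IsConj γ δ ∧ AmbFst δ}.ncard = 2 ∧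
    {δ : PSL2Z | IsConj γ δ ∧ AmbSnd δ}.ncard = 2 := by
  obtain ⟨δ₀, hconj₀, hA0⟩ := h1
  obtain ⟨δ₁, hconj₁, hA1⟩ := h2
  rw [AmbFst_iff] at hA0
  rw [AmbSnd_iff] at hA1
  have hA1' : sig δ₁ = lE⁻¹ * δ₁⁻¹ * lE := by
    have := tau_eq δ₁
    rw [hA1] at this
    rw [show sig δ₁ = lE⁻¹ * (lE * sig δ₁ * lE⁻¹) * lE from by group, ← this]
  have hA0' : tau δ₀ = (lE⁻¹)⁻¹ * δ₀⁻¹ * lE⁻¹ := by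
    rw [tau_eq δ₀, hA0, inv_inv]
  constructor
  · have hset : {δ : PSL2Z | IsConj γ δ ∧ AmbFst δ} = {δ : PSL2Z | IsConj γ δ ∧ sig δ = δ⁻¹} := by
      ext δ; simp [Set.mem_setOf_eq, AmbFst_iff]
    rw [hset]
    exact main_card sig sig_sig sE (fun g => fix_sig) (fun g => comm_sE) lE no_l_sig
      γ hprim hhyp δ₀ hconj₀ hA0 δ₁ hconj₁ hA1' (fun δ => hyp_ne_sE)
  · have hset : {δ : PSL2Z | IsConj γ δ ∧ AmbSnd δ} = {δ : PSL2Z | IsConj γ δ ∧ tau δ = δ⁻¹} := by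
      ext δ; simp [Set.mem_setOf_eq, AmbSnd_iff]
    rw [hset]
    exact main_card tau tau_tau s1E (fun g => fix_tau) (fun g => comm_s1E) lE⁻¹ no_l_tau
      γ hprim hhyp δ₁ hconj₁ hA1 δ₀ hconj₀ hA0' (fun δ => hyp_ne_s1E)

/-- Lemma 12(iv), second claim: if `γ ∈ PSL₂(ℤ)` is primitive hyperbolic and its
conjugacy class contains both an element ambiguous of the first kind and an element
ambiguous of the second kind, then exactly `2` of its conjugates are ambiguous of the
first kind and exactly `2` are ambiguous of the second kind. -/
theorem two_ambiguous_conjugates_of_each_kind (γ : PSL2Z)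
    (hprim : IsPrim γ) (hhyp : IsHyp γ)
    (h1 : ∃ δ : PSL2Z, IsConj γ δ ∧ AmbFst δ)
    (h2 : ∃ δ : PSL2Z, IsConj γ δ ∧ AmbSnd δ) :
    {δ : PSL2Z | IsConj γ δ ∧ AmbFst δ}.ncard = 2 ∧
    {δ : PSL2Z | IsConj γ δ ∧ AmbSnd δ}.ncard = 2 := by
  exact two_ambiguous_conjugates_of_each_kind' γ hprim hhyp h1 h2
end

section
/- (Remark 13.) Let A = [[a, b], [c, d]] ∈ SL₂(ℤ) have all four entries positive, and set B = [[ad + bc, 2ab], [2cd, ad + bc]]. Then B ∈ SL₂(ℤ); the image of B in PSL₂(ℤ) is hyperbolic and ambiguous of the first kind; and its translation length 2·arcosh(ad + bc) equals twice the infimum of the hyperbolic distances dist(p, q) over p in the imaginary-axis geodesic I ⊂ ℍ and q in the image A • I of I under the Möbius action of A. -/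
open Matrix
open scoped MatrixGroups UpperHalfPlane

private lemma cosh_arcosh' {x : ℝ} (hx : 1 ≤ x) : Real.cosh (arcosh x) = x := by
  have h1 : (0:ℝ) ≤ x ^ 2 - 1 := by nlinarith
  have hs : Real.sqrt (x ^ 2 - 1) ^ 2 = x ^ 2 - 1 := Real.sq_sqrt h1
  have hge : 0 ≤ Real.sqrt (x ^ 2 - 1) := Real.sqrt_nonneg _
  have hu : 0 < x + Real.sqrt (x ^ 2 - 1) := by nlinarith
  rw [arcosh, Real.cosh_log hu,
    inv_eq_of_mul_eq_one_right
      (by nlinarith : (x + Real.sqrt (x^2-1)) * (x - Real.sqrt (x^2-1)) = 1)]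
  ring

private lemma arcosh_nonneg' {x : ℝ} (hx : 1 ≤ x) : 0 ≤ arcosh x :=
  Real.log_nonneg (by nlinarith [Real.sqrt_nonneg (x^2-1)])

private lemma arcosh_le' {x d : ℝ} (hx : 1 ≤ x) (hd : 0 ≤ d) (h : x ≤ Real.cosh d) :
    arcosh x ≤ d := by
  have h2 : Real.cosh (arcosh x) ≤ Real.cosh d := by rw [cosh_arcosh' hx]; exact h
  have := Real.cosh_le_cosh.mp h2
  rwa [abs_of_nonneg (arcosh_nonneg' hx), abs_of_nonneg hd] at this

private lemma eq_arcosh' {x d : ℝ} (hx : 1 ≤ x) (hd : 0 ≤ d) (h : Real.cosh d = x) :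
    d = arcosh x := by
  have h2 : Real.cosh d ≤ Real.cosh (arcosh x) := by rw [cosh_arcosh' hx]; exact h.le
  have h3 := Real.cosh_le_cosh.mp h2
  have h4 := arcosh_le' hx hd h.ge
  rw [abs_of_nonneg hd, abs_of_nonneg (arcosh_nonneg' hx)] at h3
  linarith

/-- Remark 13: if `A = [[a, b], [c, d]] ∈ SL₂(ℤ)` has all four entries positive, then
`B = [[ad + bc, 2ab], [2cd, ad + bc]]` belongs to `SL₂(ℤ)`, its image in `PSL₂(ℤ)` is
hyperbolic and ambiguous of the first kind, and its translation length
`2 arcosh (ad + bc)` is twice the distance between the imaginary-axis geodesic `I` and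
its Möbius image `A • I`. -/
theorem doubled_common_perpendicular (A : SL(2, ℤ))
    (h00 : 0 < A 0 0) (h01 : 0 < A 0 1) (h10 : 0 < A 1 0) (h11 : 0 < A 1 1) :
    ∃ B : SL(2, ℤ),
      (B : Matrix (Fin 2) (Fin 2) ℤ) =
        !![A 0 0 * A 1 1 + A 0 1 * A 1 0, 2 * (A 0 0 * A 0 1);
           2 * (A 1 0 * A 1 1), A 0 0 * A 1 1 + A 0 1 * A 1 0] ∧
      IsHyp (QuotientGroup.mk B : PSL2Z) ∧
      AmbFst (QuotientGroup.mk B : PSL2Z) ∧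
      2 * arcosh ((A 0 0 * A 1 1 + A 0 1 * A 1 0 : ℤ) : ℝ) =
        2 * sInf (Set.image2 dist {z : ℍ | z.re = 0}
            ((fun z : ℍ => A • z) '' {z : ℍ | z.re = 0})) := by
  have hdetZ : A 0 0 * A 1 1 - A 0 1 * A 1 0 = 1 := by
    have := A.2; rwa [Matrix.det_fin_two] at this
  have hBdet : det !![A 0 0 * A 1 1 + A 0 1 * A 1 0, 2 * (A 0 0 * A 0 1);
      2 * (A 1 0 * A 1 1), A 0 0 * A 1 1 + A 0 1 * A 1 0] = 1 := by
    rw [det_fin_two_of]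
    linear_combination (A 0 0 * A 1 1 - A 0 1 * A 1 0 + 1) * hdetZ
  refine ⟨⟨_, hBdet⟩, rfl, ?_, ?_, ?_⟩
  · refine ⟨⟨_, hBdet⟩, rfl, ?_⟩
    have h1 : 1 ≤ A 0 0 * A 1 1 := mul_pos h00 h11
    have h2 : 1 ≤ A 0 1 * A 1 0 := mul_pos h01 h10
    have htr : Matrix.trace ((⟨_, hBdet⟩ : SL(2,ℤ)) : Matrix (Fin 2) (Fin 2) ℤ) =
        2 * (A 0 0 * A 1 1 + A 0 1 * A 1 0) := by
      show Matrix.trace !![A 0 0 * A 1 1 + A 0 1 * A 1 0, 2 * (A 0 0 * A 0 1);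
        2 * (A 1 0 * A 1 1), A 0 0 * A 1 1 + A 0 1 * A 1 0] = _
      rw [Matrix.trace_fin_two_of]; ring
    rw [htr, abs_of_pos (by linarith)]
    linarith
  · refine ⟨⟨_, hBdet⟩, rfl, Or.inl ?_⟩
    have hW : Wmat⁻¹ = Wmat := by
      apply Matrix.inv_eq_right_inv
      show Wmat * Wmat = 1
      ext i j
      fin_cases i <;> fin_cases j <;>
        simp [Wmat, Matrix.mul_apply, Fin.sum_univ_succ]
    rw [hW]; erw [Matrix.SpecialLinearGroup.SL2_inv_expl]
    show Wmat * !![A 0 0 * A 1 1 + A 0 1 * A 1 0, 2 * (A 0 0 * A 0 1);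
        2 * (A 1 0 * A 1 1), A 0 0 * A 1 1 + A 0 1 * A 1 0] * Wmat = _
    unfold Wmat
    ext i j
    fin_cases i <;> fin_cases j <;>
      simp [Matrix.mul_apply, Fin.sum_univ_succ] <;> ring
  · -- the metric part
    have ha : (0:ℝ) < (A 0 0 : ℝ) := by exact_mod_cast h00
    have hb : (0:ℝ) < (A 0 1 : ℝ) := by exact_mod_cast h01
    have hc : (0:ℝ) < (A 1 0 : ℝ) := by exact_mod_cast h10
    have hd : (0:ℝ) < (A 1 1 : ℝ) := by exact_mod_cast h11
    have hdet : (A 0 0 : ℝ) * (A 1 1 : ℝ) - (A 0 1 : ℝ) * (A 1 0 : ℝ) = 1 := by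
      exact_mod_cast hdetZ
    set a := (A 0 0 : ℝ); set b := (A 0 1 : ℝ); set c := (A 1 0 : ℝ); set d := (A 1 1 : ℝ)
    set m : ℝ := ((A 0 0 * A 1 1 + A 0 1 * A 1 0 : ℤ) : ℝ) with hm
    have hmval : m = a * d + b * c := by rw [hm]; push_cast; ring
    have hm1 : 1 ≤ m := by rw [hmval]; nlinarith
    -- coordinates of A • z' for z' on the imaginary axis
    have key : ∀ z' : ℍ, z'.re = 0 →
        (A • z' : ℍ).re = (a*c*z'.im^2 + b*d)/(c^2*z'.im^2 + d^2) ∧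
        (A • z' : ℍ).im = z'.im/(c^2*z'.im^2 + d^2) := by
      intro z' hz'
      have hzc : (z' : ℂ) = z'.im * Complex.I := by
        apply Complex.ext <;> simp [hz']
      have hw : ((A • z' : ℍ) : ℂ) = ((a : ℂ) * (z'.im * Complex.I) + b) /
          ((c : ℂ) * (z'.im * Complex.I) + d) := by
        rw [UpperHalfPlane.specialLinearGroup_apply]
        simp [hzc, a, b, c, d]
      have hD : c^2*z'.im^2 + d^2 ≠ 0 := by positivity
      constructor
      · rw [← UpperHalfPlane.coe_re, hw]
        simp [Complex.div_re, Complex.normSq_apply]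
        field_simp
        ring
      · rw [← UpperHalfPlane.coe_im, hw]
        simp [Complex.div_im, Complex.normSq_apply]
        field_simp
        ring_nf
        linear_combination (z'.im^2*c^2 + d^2) * hdet
    -- the distance formula squared
    have hdist2 : ∀ z w : ℍ, z.re = 0 →
        dist (z : ℂ) (w : ℂ) ^ 2 = w.re^2 + (z.im - w.im)^2 := by
      intro z w hz
      rw [Complex.dist_eq, Complex.sq_norm, Complex.normSq_apply]
      simp [hz]
      ring
    -- lower bound on cosh distance
    have coshlb : ∀ z z' : ℍ, z.re = 0 → z'.re = 0 →
        m ≤ Real.cosh (dist z (A • z')) := by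
      intro z z' hz hz'
      obtain ⟨hre, him⟩ := key z' hz'
      rw [UpperHalfPlane.cosh_dist, hdist2 z _ hz, hre, him]
      set t := z.im with ht; set s := z'.im with hs
      have ht0 : 0 < t := z.im_pos
      have hs0 : 0 < s := z'.im_pos
      have hBF : (a^2*s^2 + b^2)*(c^2*s^2+d^2) = (a*c*s^2 + b*d)^2 + s^2 := by
        linear_combination (s^2*(a*d - b*c) + s^2) * hdet
      have hD0 : (0:ℝ) < c^2*s^2+d^2 := by positivity
      have hY : 0 < 2 * t * (s / (c^2*s^2+d^2)) := by positivity
      rw [← sub_le_iff_le_add', le_div_iff₀ hY]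
      have h1' : (0:ℝ) ≤ (c^2*s^2+d^2)*((a*s-t*d)^2 + (b-t*c*s)^2) := by positivity
      have hid : (a*c*s^2+b*d)^2 + (t*(c^2*s^2+d^2) - s)^2
            - (a*d+b*c-1)*(2*t*s*(c^2*s^2+d^2))
          = (c^2*s^2+d^2)*((a*s-t*d)^2 + (b-t*c*s)^2) + s^2*(1-(a*d-b*c)^2) := by
        ring
      have h3 : s^2*(1-(a*d-b*c)^2) = 0 := by rw [hdet]; ring
      have hpoly : (m - 1) * (2*t*s*(c^2*s^2+d^2))
          ≤ (a*c*s^2 + b*d)^2 + (t*(c^2*s^2+d^2) - s)^2 := by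
        rw [hmval]; linarith [hid, h1', h3]
      have hD2 : (0:ℝ) < (c^2*s^2+d^2)^2 := by positivity
      calc (m - 1) * (2 * t * (s / (c^2*s^2+d^2)))
          = (m - 1) * (2*t*s*(c^2*s^2+d^2)) / (c^2*s^2+d^2)^2 := by
            field_simp
        _ ≤ ((a*c*s^2 + b*d)^2 + (t*(c^2*s^2+d^2) - s)^2) / (c^2*s^2+d^2)^2 := by gcongr
        _ = ((a*c*s^2 + b*d)/(c^2*s^2+d^2))^2 + (t - s/(c^2*s^2+d^2))^2 := by
            field_simp
    -- the optimal points
    set t0 := Real.sqrt ((a*b)/(c*d)) with ht0def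
    set s0 := Real.sqrt ((b*d)/(a*c)) with hs0def
    have ht0 : 0 < t0 := Real.sqrt_pos.mpr (by positivity)
    have hs0 : 0 < s0 := Real.sqrt_pos.mpr (by positivity)
    have ht0sq : t0^2 = a*b/(c*d) := Real.sq_sqrt (by positivity)
    have hs0sq : s0^2 = b*d/(a*c) := Real.sq_sqrt (by positivity)
    have hts : t0*s0 = b/c := by
      rw [ht0def, hs0def, ← Real.sqrt_mul (by positivity),
        show (a*b/(c*d))*((b*d)/(a*c)) = (b/c)^2 by field_simp]
      exact Real.sqrt_sq (by positivity)
    set z0 : ℍ := UpperHalfPlane.mk (t0 * Complex.I) (by simpa using ht0) with hz0def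
    set z1 : ℍ := UpperHalfPlane.mk (s0 * Complex.I) (by simpa using hs0) with hz1def
    have hz0re : z0.re = 0 := by simp [hz0def]
    have hz0im : z0.im = t0 := by simp [hz0def]
    have hz1re : z1.re = 0 := by simp [hz1def]
    have hz1im : z1.im = s0 := by simp [hz1def]
    have hm0 : 0 < m := lt_of_lt_of_le one_pos hm1
    have hm2 : m^2 = 4*a*b*c*d + 1 := by
      rw [hmval]; linear_combination (a*d - b*c + 1) * hdet
    -- value of the distance at the optimal points
    have hDval : c^2*s0^2 + d^2 = d*m/a := by
      rw [hs0sq, hmval]; field_simp; ring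
    obtain ⟨hre1, him1⟩ := key z1 hz1re
    rw [hz1im] at hre1 him1
    have hre1' : (A • z1 : ℍ).re = 2*a*b/m := by
      rw [hre1, hDval, hs0sq]; field_simp; ring
    have him1' : (A • z1 : ℍ).im = s0*a/(d*m) := by
      rw [him1, hDval]; field_simp
    have heq : Real.cosh (dist z0 (A • z1)) = m := by
      rw [UpperHalfPlane.cosh_dist, hdist2 z0 _ hz0re, hre1', him1', hz0im]
      have hexp : (t0 - s0*a/(d*m))^2 =
          a*b/(c*d) - 2*(b/c)*(a/(d*m)) + (b*d/(a*c))*(a/(d*m))^2 := by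
        have h' : (t0 - s0*a/(d*m))^2 =
            t0^2 - 2*(t0*s0)*(a/(d*m)) + s0^2*(a/(d*m))^2 := by ring
        rw [h', ht0sq, hs0sq, hts]
      have hden : 2*t0*(s0*a/(d*m)) = 2*(b/c)*(a/(d*m)) := by
        rw [show 2*t0*(s0*a/(d*m)) = 2*(t0*s0)*(a/(d*m)) by ring, hts]
      rw [hexp, hden]
      field_simp
      linear_combination (-1) * hm2
    have hdeq : dist z0 (A • z1) = arcosh m := eq_arcosh' hm1 dist_nonneg heq
    -- compute the infimum
    have hmemS : arcosh m ∈ Set.image2 dist {z : ℍ | z.re = 0}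
        ((fun z : ℍ => A • z) '' {z : ℍ | z.re = 0}) := by
      rw [← hdeq]
      exact Set.mem_image2_of_mem hz0re (Set.mem_image_of_mem _ hz1re)
    have hlbS : ∀ x ∈ Set.image2 dist {z : ℍ | z.re = 0}
        ((fun z : ℍ => A • z) '' {z : ℍ | z.re = 0}), arcosh m ≤ x := by
      rintro x ⟨z, hz, w, ⟨z', hz', rfl⟩, rfl⟩
      exact arcosh_le' hm1 dist_nonneg (coshlb z z' hz hz')
    rw [le_antisymm (csInf_le ⟨arcosh m, hlbS⟩ hmemS) (le_csInf ⟨_, hmemS⟩ hlbS)]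
end
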